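/- Let t ≥ 1, n ≥ t+3, and let A be a t-intersecting family of set partitions of [n]. If S_{ij}(A) = H(a_1,...,a_t,b) for some i ≠ j and distinct a_1,...,a_t,b ∈ [n], then A = H(a_1,...,a_t,b). -/
import Mathlib


/-- A set partition of `Fin n`, modelled as a finite set of blocks. -/
def IsSetPartition {n : ℕ} (P : Finset (Finset (Fin n))) : Prop :=
  (∀ b ∈ P, b.Nonempty) ∧ (∀ b ∈ P, ∀ c ∈ P, b ≠ c → Disjoint b c) ∧
    P.sup id = Finset.univ

/-- The `n`-th Bell number: the number of set partitions of an `n`-element set. -/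
noncomputable def bell (n : ℕ) : ℕ :=
  Set.ncard {P : Finset (Finset (Fin n)) | IsSetPartition P}

/-- The number of singleton-free set partitions of an `n`-element set. -/
noncomputable def bellT (n : ℕ) : ℕ :=
  Set.ncard {P : Finset (Finset (Fin n)) | IsSetPartition P ∧ ∀ b ∈ P, 2 ≤ b.card}

/-- The `(i,j)`-split of a set partition `P`. -/
noncomputable def splitP {n : ℕ} (i j : Fin n) (P : Finset (Finset (Fin n))) :
    Finset (Finset (Fin n)) :=
  if h : ∃ B, B ∈ P ∧ i ∈ B ∧ j ∈ B then
    (P \ {h.choose}) ∪ {{i}, h.choose \ {i}}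
  else P

/-- The `(i,j)`-splitting of a family of set partitions. -/
noncomputable def splitFam {n : ℕ} (i j : Fin n)
    (A : Set (Finset (Finset (Fin n)))) : Set (Finset (Finset (Fin n))) :=
  (A \ {P ∈ A | splitP i j P ∉ A}) ∪ (splitP i j '' {P ∈ A | splitP i j P ∉ A})

/-- A family is `t`-intersecting if any two members share at least `t` blocks. -/
def TInter {n : ℕ} (t : ℕ) (A : Set (Finset (Finset (Fin n)))) : Prop :=
  ∀ P ∈ A, ∀ Q ∈ A, t ≤ (P ∩ Q).card

/-- `Qpart x y` is the set partition with block `{x,y}` and all other blocks singletons. -/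
def Qpart {n : ℕ} (x y : Fin n) : Finset (Finset (Fin n)) :=
  insert ({x, y} : Finset (Fin n))
    (Finset.image (fun j => ({j} : Finset (Fin n))) (Finset.univ \ {x, y}))

/-- The Hilton–Milner type family `H(a_1,…,a_t,b)`. -/
def HM {n t : ℕ} (a : Fin t → Fin n) (b : Fin n) : Set (Finset (Finset (Fin n))) :=
  {P | IsSetPartition P ∧ (∀ i, ({a i} : Finset (Fin n)) ∈ P) ∧
    ∃ c : Fin n, (∀ i, c ≠ a i) ∧ c ≠ b ∧ ({c} : Finset (Fin n)) ∈ P}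
  ∪ {P | ∃ i : Fin t, P = Qpart (a i) b}

namespace Undo

open Finset

variable {n : ℕ}

/-- singletons family -/
def sgs (s : Finset (Fin n)) : Finset (Finset (Fin n)) := s.image fun x => ({x} : Finset (Fin n))

lemma mem_sgs {s : Finset (Fin n)} {y : Finset (Fin n)} :
    y ∈ sgs s ↔ ∃ w ∈ s, y = {w} := by
  simp [sgs, eq_comm]

lemma sgs_card (s : Finset (Fin n)) : (sgs s).card = s.card :=
  Finset.card_image_of_injective _ (fun _ _ h => Finset.singleton_injective h)

lemma block_eq {P : Finset (Finset (Fin n))} (hP : IsSetPartition P) {X Y : Finset (Fin n)}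
    {x : Fin n} (hX : X ∈ P) (hY : Y ∈ P) (hx : x ∈ X) (hy : x ∈ Y) : X = Y := by
  by_contra h
  exact (Finset.disjoint_left.mp (hP.2.1 X hX Y hY h) hx) hy

lemma exists_block {P : Finset (Finset (Fin n))} (hP : IsSetPartition P) (x : Fin n) :
    ∃ X ∈ P, x ∈ X := by
  have hx : x ∈ P.sup id := hP.2.2 ▸ Finset.mem_univ x
  simpa using (Finset.mem_sup.mp hx)

lemma not_singleton_mem {P : Finset (Finset (Fin n))} (hP : IsSetPartition P)
    {B : Finset (Fin n)} {x y : Fin n} (hB : B ∈ P) (hx : x ∈ B) (hy : y ∈ B)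
    (hxy : y ≠ x) : ({x} : Finset (Fin n)) ∉ P := by
  intro hmem
  have := block_eq hP hmem hB (Finset.mem_singleton_self x) hx
  rw [← this] at hy
  exact hxy (Finset.mem_singleton.mp hy)

lemma part_subset_eq {P Q : Finset (Finset (Fin n))} (hP : IsSetPartition P)
    (hQ : IsSetPartition Q) (h : Q ⊆ P) : Q = P := by
  apply Finset.Subset.antisymm h
  intro X hX
  obtain ⟨x, hx⟩ := hP.1 X hX
  obtain ⟨Y, hY, hxY⟩ := exists_block hQ x
  rwa [block_eq hP hX (h hY) hx hxY]

lemma mem_Qpart {x y : Fin n} {z : Finset (Fin n)} :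
    z ∈ Qpart x y ↔ z = {x, y} ∨ ∃ w, w ≠ x ∧ w ≠ y ∧ z = {w} := by
  simp [Qpart, eq_comm (a := z), and_assoc]

lemma Qpart_isPart {x y : Fin n} (hxy : x ≠ y) : IsSetPartition (Qpart x y) := by
  refine ⟨?_, ?_, ?_⟩
  · intro z hz
    rcases mem_Qpart.mp hz with h | ⟨w, _, _, h⟩ <;> subst h <;> simp
  · intro z hz z' hz' hne
    rw [Finset.disjoint_left]
    intro u hu hu'
    rcases mem_Qpart.mp hz with h | ⟨w, hwx, hwy, h⟩ <;>
      rcases mem_Qpart.mp hz' with h' | ⟨w', hwx', hwy', h'⟩ <;> subst h <;> subst h' <;>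
        simp_all <;> rcases hu with rfl | rfl <;> simp_all
  · apply Finset.eq_univ_of_forall
    intro u
    rw [Finset.mem_sup]
    by_cases hu : u = x ∨ u = y
    · exact ⟨{x, y}, by simp [mem_Qpart], by simpa using hu⟩
    · push_neg at hu
      exact ⟨{u}, mem_Qpart.mpr (Or.inr ⟨u, hu.1, hu.2, rfl⟩), by simp⟩

/-- generic partition construction: singletons on s plus one clump -/
lemma part_clump1 {s Z : Finset (Fin n)} (hZ : Z = Finset.univ \ s) (hne : Z.Nonempty) :
    IsSetPartition (sgs s ∪ {Z}) := by
  subst hZ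
  refine ⟨?_, ?_, ?_⟩
  · intro z hz
    rcases Finset.mem_union.mp hz with h | h
    · obtain ⟨w, _, rfl⟩ := mem_sgs.mp h; simp
    · simp only [Finset.mem_singleton] at h; subst h; exact hne
  · intro z hz z' hz' hne'
    rw [Finset.disjoint_left]
    intro u hu hu'
    rcases Finset.mem_union.mp hz with h | h <;> rcases Finset.mem_union.mp hz' with h' | h'
    · obtain ⟨w, hw, rfl⟩ := mem_sgs.mp h
      obtain ⟨w', hw', rfl⟩ := mem_sgs.mp h'
      simp_all
    · obtain ⟨w, hw, rfl⟩ := mem_sgs.mp h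
      simp only [Finset.mem_singleton] at h'; subst h'
      simp_all
    · obtain ⟨w, hw, rfl⟩ := mem_sgs.mp h'
      simp only [Finset.mem_singleton] at h; subst h
      simp_all
    · simp only [Finset.mem_singleton] at h h'; exact hne' (h.trans h'.symm)
  · apply Finset.eq_univ_of_forall
    intro u
    rw [Finset.mem_sup]
    by_cases hu : u ∈ s
    · exact ⟨{u}, Finset.mem_union_left _ (mem_sgs.mpr ⟨u, hu, rfl⟩), by simp⟩
    · exact ⟨_, Finset.mem_union_right _ (Finset.mem_singleton_self _), by simp [hu]⟩

/-- generic partition construction: singletons on s plus two clumps -/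
lemma part_clump2 {s X Y : Finset (Fin n)} (hXY : Disjoint X Y)
    (hcov : X ∪ Y = Finset.univ \ s) (hX : X.Nonempty) (hY : Y.Nonempty) :
    IsSetPartition (sgs s ∪ {X, Y}) := by
  have hXs : ∀ u ∈ X, u ∉ s := by
    intro u hu; have : u ∈ X ∪ Y := Finset.mem_union_left _ hu
    rw [hcov] at this; exact (Finset.mem_sdiff.mp this).2
  have hYs : ∀ u ∈ Y, u ∉ s := by
    intro u hu; have : u ∈ X ∪ Y := Finset.mem_union_right _ hu
    rw [hcov] at this; exact (Finset.mem_sdiff.mp this).2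
  refine ⟨?_, ?_, ?_⟩
  · intro z hz
    rcases Finset.mem_union.mp hz with h | h
    · obtain ⟨w, _, rfl⟩ := mem_sgs.mp h; simp
    · rcases Finset.mem_insert.mp h with rfl | h
      · exact hX
      · simp only [Finset.mem_singleton] at h; subst h; exact hY
  · intro z hz z' hz' hne'
    rw [Finset.disjoint_left]
    intro u hu hu'
    have key : ∀ w, w ∈ z → (z = {w} ∧ w ∈ s) ∨ z = X ∨ z = Y := by
      intro w hw
      rcases Finset.mem_union.mp hz with h | h
      · obtain ⟨w', hw', rfl⟩ := mem_sgs.mp h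
        left; simp_all
      · rcases Finset.mem_insert.mp h with rfl | h
        · right; left; rfl
        · right; right; simpa using h
    have key' : ∀ w, w ∈ z' → (z' = {w} ∧ w ∈ s) ∨ z' = X ∨ z' = Y := by
      intro w hw
      rcases Finset.mem_union.mp hz' with h | h
      · obtain ⟨w', hw', rfl⟩ := mem_sgs.mp h
        left; simp_all
      · rcases Finset.mem_insert.mp h with rfl | h
        · right; left; rfl
        · right; right; simpa using h
    rcases key u hu with ⟨rfl, hus⟩ | rfl | rfl <;>
      rcases key' u hu' with ⟨rfl, hus'⟩ | rfl | rfl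
    · simp_all
    · exact hXs u hu' (by simpa using hus)
    · exact hYs u hu' (by simpa using hus)
    · exact hXs u hu (by simpa using hus')
    · exact hne' rfl
    · exact (Finset.disjoint_left.mp hXY hu) hu'
    · exact hYs u hu (by simpa using hus')
    · exact (Finset.disjoint_left.mp hXY hu') hu
    · exact hne' rfl
  · apply Finset.eq_univ_of_forall
    intro u
    rw [Finset.mem_sup]
    by_cases hu : u ∈ s
    · exact ⟨{u}, Finset.mem_union_left _ (mem_sgs.mpr ⟨u, hu, rfl⟩), by simp⟩
    · have : u ∈ X ∪ Y := by rw [hcov]; simp [hu]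
      rcases Finset.mem_union.mp this with h | h
      · exact ⟨X, Finset.mem_union_right _ (by simp), h⟩
      · exact ⟨Y, Finset.mem_union_right _ (by simp), h⟩

/-- cardinality bound via covering -/
lemma card_inter_le {U V : Finset (Finset (Fin n))} {s' : Finset (Fin n)}
    {e : Finset (Finset (Fin n))}
    (h : ∀ y, y ∈ U → y ∈ V → y ∈ sgs s' ∪ e) : (U ∩ V).card ≤ s'.card + e.card := by
  calc (U ∩ V).card ≤ (sgs s' ∪ e).card := by
        apply Finset.card_le_card
        intro y hy
        exact h y (Finset.mem_inter.mp hy).1 (Finset.mem_inter.mp hy).2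
    _ ≤ (sgs s').card + e.card := Finset.card_union_le _ _
    _ = s'.card + e.card := by rw [sgs_card]

section HMfacts

variable {t : ℕ} {a : Fin t → Fin n} {b : Fin n}

lemma HM_isPart (hab : ∀ k, a k ≠ b) {S : Finset (Finset (Fin n))} (hs : S ∈ HM a b) :
    IsSetPartition S := by
  rcases hs with h | ⟨k, rfl⟩
  · exact h.1
  · exact Qpart_isPart (hab k)

lemma Qpart_mem_HM (k : Fin t) : Qpart (a k) b ∈ HM a b := Or.inr ⟨k, rfl⟩

end HMfacts

lemma splitP_eq {P : Finset (Finset (Fin n))} {B : Finset (Fin n)} {i j : Fin n}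
    (hP : IsSetPartition P) (hB : B ∈ P) (hi : i ∈ B) (hj : j ∈ B) :
    splitP i j P = (P \ {B}) ∪ {{i}, B \ {i}} := by
  have h : ∃ C, C ∈ P ∧ i ∈ C ∧ j ∈ C := ⟨B, hB, hi, hj⟩
  rw [splitP, dif_pos h]
  have : h.choose = B := block_eq hP h.choose_spec.1 hB h.choose_spec.2.1 hi
  rw [this]

lemma exists_block_of_splitP_ne {P : Finset (Finset (Fin n))} {i j : Fin n}
    (h : splitP i j P ≠ P) : ∃ B ∈ P, i ∈ B ∧ j ∈ B := by
  by_contra hc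
  push_neg at hc
  have : ¬ ∃ B, B ∈ P ∧ i ∈ B ∧ j ∈ B := by
    rintro ⟨B, hB, hi, hj⟩; exact hc B hB hi hj
  rw [splitP, dif_neg this] at h
  exact h rfl

lemma singleton_i_mem_splitP {P : Finset (Finset (Fin n))} {B : Finset (Fin n)} {i j : Fin n}
    (hP : IsSetPartition P) (hB : B ∈ P) (hi : i ∈ B) (hj : j ∈ B) :
    ({i} : Finset (Fin n)) ∈ splitP i j P := by
  rw [splitP_eq hP hB hi hj]
  exact Finset.mem_union_right _ (by simp)


end Undo

open Undo Finset

theorem main_contra {n t : ℕ} (ht : 0 < t) (hn : t + 3 ≤ n)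
    (A : Set (Finset (Finset (Fin n)))) (hA : TInter t A)
    (i j : Fin n) (hij : i ≠ j) (a : Fin t → Fin n) (b : Fin n)
    (ha : Function.Injective a) (hab : ∀ k, a k ≠ b)
    (hW1 : ∀ S ∈ HM a b, ({i} : Finset (Fin n)) ∉ S → S ∈ A)
    (hW2 : ∀ S Z, S ∈ HM a b → S ∉ A → Z ∈ S → j ∈ Z →
      ((S \ {{i}, Z}) ∪ {insert i Z}) ∈ A)
    (P : Finset (Finset (Fin n))) (B : Finset (Fin n)) (hPA : P ∈ A) (hPp : IsSetPartition P)
    (hPH : P ∉ HM a b) (hBP : B ∈ P) (hiB : i ∈ B) (hjB : j ∈ B) : False := by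
  classical
  set aset : Finset (Fin n) := Finset.univ.image a with haset_def
  have hmem_aset : ∀ x, x ∈ aset ↔ ∃ k, a k = x := by intro x; simp [haset_def]
  have haset_card : aset.card = t := by
    rw [haset_def, Finset.card_image_of_injective _ ha, Finset.card_univ, Fintype.card_fin]
  have hb_aset : b ∉ aset := by
    rw [hmem_aset]; rintro ⟨k, hk⟩; exact hab k hk
  have hjne : j ≠ i := fun h => hij h.symm
  have hsingB : ∀ x ∈ B, ({x} : Finset (Fin n)) ∉ P := by
    intro x hx
    by_cases hxi : x = i
    · subst hxi; exact not_singleton_mem hPp hBP hx hjB hjne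
    · exact not_singleton_mem hPp hBP hx hiB (fun h => hxi h.symm)
  have hiP : ({i} : Finset (Fin n)) ∉ P := hsingB i hiB
  have hjP : ({j} : Finset (Fin n)) ∉ P := hsingB j hjB
  have hPH1 : ¬ ((∀ k, ({a k} : Finset (Fin n)) ∈ P) ∧
      ∃ c : Fin n, (∀ k, c ≠ a k) ∧ c ≠ b ∧ ({c} : Finset (Fin n)) ∈ P) := by
    rintro ⟨h1, h2⟩; exact hPH (Or.inl ⟨hPp, h1, h2⟩)
  have hPQ : ∀ k, P ≠ Qpart (a k) b := fun k h => hPH (Or.inr ⟨k, h⟩)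
  have contra : ∀ R₁ ∈ A, ∀ R₂ ∈ A, ∀ s' : Finset (Fin n), s'.card + 1 ≤ t →
      (∀ y : Finset (Fin n), y ∈ R₁ → y ∈ R₂ → ∃ w ∈ s', y = {w}) → False := by
    intro R₁ h₁ R₂ h₂ s' hs' hcov
    have h3 := hA R₁ h₁ R₂ h₂
    have h4 : (R₁ ∩ R₂).card ≤ s'.card := by
      have hsub : R₁ ∩ R₂ ⊆ sgs s' := by
        intro y hy
        obtain ⟨w, hw, rfl⟩ := hcov y (Finset.mem_inter.mp hy).1 (Finset.mem_inter.mp hy).2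
        exact mem_sgs.mpr ⟨w, hw, rfl⟩
      calc (R₁ ∩ R₂).card ≤ (sgs s').card := Finset.card_le_card hsub
        _ = s'.card := sgs_card s'
    omega
  have hcard_compl : ∀ s : Finset (Fin n), (Finset.univ \ s).card = n - s.card := by
    intro s
    rw [Finset.card_sdiff_of_subset (Finset.subset_univ _), Finset.card_univ, Fintype.card_fin]
  have hcard_ins : ∀ (c : Fin n), (insert c aset).card ≤ t + 1 := by
    intro c
    calc (insert c aset).card ≤ aset.card + 1 := Finset.card_insert_le _ _
      _ = t + 1 := by rw [haset_card]
  -- T-type partners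
  have hT_HM : ∀ c : Fin n, c ∉ aset → c ≠ b →
      (sgs (insert c aset) ∪ {Finset.univ \ insert c aset}) ∈ HM a b := by
    intro c hc1 hc2
    have hZ : (Finset.univ \ insert c aset).Nonempty := by
      rw [← Finset.card_pos, hcard_compl]
      have := hcard_ins c
      omega
    refine Or.inl ⟨part_clump1 rfl hZ, ?_, c, ?_, hc2, ?_⟩
    · intro k
      exact Finset.mem_union_left _ (mem_sgs.mpr ⟨a k,
        Finset.mem_insert_of_mem ((hmem_aset _).mpr ⟨k, rfl⟩), rfl⟩)
    · intro k h
      exact hc1 ((hmem_aset _).mpr ⟨k, h.symm⟩)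
    · exact Finset.mem_union_left _ (mem_sgs.mpr ⟨c, Finset.mem_insert_self _ _, rfl⟩)
  have hbZc : ∀ c : Fin n, c ≠ b → b ∈ Finset.univ \ insert c aset := by
    intro c hc
    simp only [Finset.mem_sdiff, Finset.mem_univ, Finset.mem_insert, true_and, not_or]
    exact ⟨fun h => hc h.symm, hb_aset⟩
  have herase_card : ∀ x ∈ aset, (aset.erase x).card + 1 = t := by
    intro x hx
    rw [Finset.card_erase_of_mem hx, haset_card]
    omega
  -- main case analysis on the position of i
  by_cases hip : ∃ p, i = a p
  · -- CASE I : i = a p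
    obtain ⟨p, hipv⟩ := hip
    have hib : i ≠ b := by rw [hipv]; exact hab p
    have hias : i ∈ aset := by rw [hipv, hmem_aset]; exact ⟨p, rfl⟩
    have hapP : ({a p} : Finset (Fin n)) ∉ P := by rw [← hipv]; exact hiP
    have hapB : a p ∈ B := hipv ▸ hiB
    have hcontra_p : (aset.erase (a p)).card + 1 ≤ t := by
      have := herase_card (a p) ((hmem_aset _).mpr ⟨p, rfl⟩)
      omega
    have hQpA : Qpart (a p) b ∈ A := by
      apply hW1 _ (Qpart_mem_HM p)
      intro hmem2
      rcases mem_Qpart.mp hmem2 with h | ⟨w, hw1, hw2, h⟩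
      · have : b ∈ ({i} : Finset (Fin n)) := by rw [h]; simp
        exact hib (Finset.mem_singleton.mp this).symm
      · have hwi : w = i := Finset.singleton_injective h.symm
        exact hw1 (hwi.trans hipv)
    set Cset : Finset (Fin n) := Finset.univ \ insert b aset with hCset_def
    have hCmem : ∀ c, c ∈ Cset ↔ c ≠ b ∧ c ∉ aset := by
      intro c
      simp only [hCset_def, Finset.mem_sdiff, Finset.mem_univ, Finset.mem_insert, true_and,
        not_or]
    have hC2 : 2 ≤ Cset.card := by
      rw [hCset_def, hcard_compl]
      have := hcard_ins b
      omega
    -- a singleton {w} of P common with Qpart (a p) b yields w ∈ aset under a no-C-singleton hyp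
    have hQcov : ∀ (hnoC : ∀ c ∈ Cset, ({c} : Finset (Fin n)) ∉ P)
        (hpair : ({a p, b} : Finset (Fin n)) ∉ P),
        ∀ y : Finset (Fin n), y ∈ P → y ∈ Qpart (a p) b →
          ∃ w ∈ aset.erase (a p), y = {w} := by
      intro hnoC hpair y hyP hyQ
      rcases mem_Qpart.mp hyQ with rfl | ⟨w, hw1, hw2, rfl⟩
      · exact absurd hyP hpair
      · refine ⟨w, Finset.mem_erase.mpr ⟨hw1, ?_⟩, rfl⟩
        by_contra h
        exact hnoC w ((hCmem w).mpr ⟨hw2, h⟩) hyP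
    by_cases hgood : ∃ c ∈ Cset, c ≠ j ∧ ({c} : Finset (Fin n)) ∉ P ∧
        (Finset.univ \ insert c aset ∉ P) ∧ insert i (Finset.univ \ insert c aset) ∉ P
    · -- I-I
      obtain ⟨c, hcC, hcj, hcP, hZcP, hiZcP⟩ := hgood
      obtain ⟨hcb, hcas⟩ := (hCmem c).mp hcC
      set S : Finset (Finset (Fin n)) := sgs (insert c aset) ∪ {Finset.univ \ insert c aset}
        with hS_def
      have hSH : S ∈ HM a b := hT_HM c hcas hcb
      by_cases hSA : S ∈ A
      · refine contra P hPA _ hSA (aset.erase (a p)) hcontra_p ?_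
        intro y hyP hyT
        rcases Finset.mem_union.mp hyT with h | h
        · obtain ⟨w, hw, rfl⟩ := mem_sgs.mp h
          rcases Finset.mem_insert.mp hw with hwc | hwa
          · exact absurd (hwc ▸ hyP) hcP
          · exact ⟨w, Finset.mem_erase.mpr ⟨fun h0 => hapP (h0 ▸ hyP), hwa⟩, rfl⟩
        · exfalso
          simp only [Finset.mem_singleton] at h
          exact hZcP (h ▸ hyP)
      · by_cases hjZ : j ∈ Finset.univ \ insert c aset
        · have hMA := hW2 S _ hSH hSA (Finset.mem_union_right _ (Finset.mem_singleton_self _)) hjZ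
          refine contra P hPA _ hMA (aset.erase (a p)) hcontra_p ?_
          intro y hyP hyM
          rcases Finset.mem_union.mp hyM with h | h
          · have h2 := Finset.mem_sdiff.mp h
            simp only [Finset.mem_insert, Finset.mem_singleton, not_or] at h2
            rcases Finset.mem_union.mp h2.1 with h3 | h3
            · obtain ⟨w, hw, rfl⟩ := mem_sgs.mp h3
              rcases Finset.mem_insert.mp hw with hwc | hwa
              · exact absurd (hwc ▸ hyP) hcP
              · exact ⟨w, Finset.mem_erase.mpr ⟨fun h0 => hapP (h0 ▸ hyP), hwa⟩, rfl⟩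
            · simp only [Finset.mem_singleton] at h3
              exact absurd h3 h2.2.2
          · exfalso
            simp only [Finset.mem_singleton] at h
            exact hiZcP (h ▸ hyP)
        · have hjas : j ∈ aset := by
            simp only [Finset.mem_sdiff, Finset.mem_univ, Finset.mem_insert, true_and,
              not_or, not_and, not_not] at hjZ
            exact hjZ (fun h => hcj h.symm)
          have hjS : ({j} : Finset (Fin n)) ∈ S :=
            Finset.mem_union_left _ (mem_sgs.mpr ⟨j, Finset.mem_insert_of_mem hjas, rfl⟩)
          have hMA := hW2 S _ hSH hSA hjS (Finset.mem_singleton_self j)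
          have hs'card : (insert c ((aset.erase (a p)).erase j)).card + 1 ≤ t := by
            have h1 : ((aset.erase (a p)).erase j).card = t - 2 := by
              rw [Finset.card_erase_of_mem
                (Finset.mem_erase.mpr ⟨fun h => hjne (h.trans hipv.symm), hjas⟩),
                Finset.card_erase_of_mem ((hmem_aset _).mpr ⟨p, rfl⟩), haset_card]
              omega
            have h2 := Finset.card_insert_le c ((aset.erase (a p)).erase j)
            have h3 : 2 ≤ t := by
              obtain ⟨q, hjq⟩ := (hmem_aset j).mp hjas
              have hpq : p ≠ q := fun h => hjne (by rw [← hjq, ← h, ← hipv])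
              by_contra h
              push_neg at h
              apply hpq
              have hp' := p.isLt
              have hq' := q.isLt
              apply Fin.ext
              omega
            omega
          refine contra _ hMA _ hQpA (insert c ((aset.erase (a p)).erase j)) hs'card ?_
          intro y hyM hyQ
          rcases mem_Qpart.mp hyQ with rfl | ⟨w, hw1, hw2, rfl⟩
          · exfalso
            rcases Finset.mem_union.mp hyM with h2 | h2
            · have h3 := (Finset.mem_sdiff.mp h2).1
              rcases Finset.mem_union.mp h3 with h4 | h4
              · obtain ⟨w', hw', hww⟩ := mem_sgs.mp h4
                have : b ∈ ({w'} : Finset (Fin n)) := by rw [← hww]; simp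
                have h5 : a p ∈ ({w'} : Finset (Fin n)) := by rw [← hww]; simp
                exact hab p ((Finset.mem_singleton.mp h5).trans
                  (Finset.mem_singleton.mp this).symm)
              · simp only [Finset.mem_singleton] at h4
                have : a p ∈ Finset.univ \ insert c aset := by rw [← h4]; simp
                simp only [Finset.mem_sdiff, Finset.mem_univ, Finset.mem_insert, true_and,
                  not_or] at this
                exact this.2 ((hmem_aset _).mpr ⟨p, rfl⟩)
            · simp only [Finset.mem_singleton] at h2
              have : b ∈ insert i ({j} : Finset (Fin n)) := by rw [← h2]; simp
              rcases Finset.mem_insert.mp this with h5 | h5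
              · exact hib h5.symm
              · exact hb_aset ((Finset.mem_singleton.mp h5) ▸ hjas)
          · rcases Finset.mem_union.mp hyM with h2 | h2
            · have h3 := Finset.mem_sdiff.mp h2
              simp only [Finset.mem_insert, Finset.mem_singleton, not_or] at h3
              rcases Finset.mem_union.mp h3.1 with h4 | h4
              · obtain ⟨w', hw', hww⟩ := mem_sgs.mp h4
                have hwweq : w = w' := Finset.singleton_injective hww
                subst hwweq
                rcases Finset.mem_insert.mp hw' with hwc | hwa
                · exact ⟨w, by rw [hwc]; exact Finset.mem_insert_self c _, rfl⟩
                · refine ⟨w, Finset.mem_insert_of_mem (Finset.mem_erase.mpr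
                    ⟨?_, Finset.mem_erase.mpr ⟨hw1, hwa⟩⟩), rfl⟩
                  intro h0
                  exact h3.2.2 (by rw [h0])
              · exfalso
                simp only [Finset.mem_singleton] at h4
                have : b ∈ ({w} : Finset (Fin n)) := by rw [h4]; exact hbZc c hcb
                exact hw2 (Finset.mem_singleton.mp this).symm
            · exfalso
              simp only [Finset.mem_singleton] at h2
              have hi2 : i ∈ ({w} : Finset (Fin n)) := by rw [h2]; exact Finset.mem_insert_self _ _
              have hj2 : j ∈ ({w} : Finset (Fin n)) := by
                rw [h2]; exact Finset.mem_insert_of_mem (Finset.mem_singleton_self _)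
              exact hij ((Finset.mem_singleton.mp hi2).trans (Finset.mem_singleton.mp hj2).symm)
    · -- I-F
      have hfail : ∀ c ∈ Cset, c ≠ j → ({c} : Finset (Fin n)) ∉ P →
          (Finset.univ \ insert c aset ∈ P ∨ insert i (Finset.univ \ insert c aset) ∈ P) := by
        intro c hc hcj hcP
        by_contra h
        push_neg at h
        exact hgood ⟨c, hc, hcj, hcP, h.1, h.2⟩
      by_cases hexc : ∃ c₁ ∈ Cset, c₁ ≠ j ∧ ({c₁} : Finset (Fin n)) ∉ P ∧
          Finset.univ \ insert c₁ aset ∈ P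
      · -- I-F (a)
        obtain ⟨c₁, hc₁C, hc₁j, hc₁P, hZ1P⟩ := hexc
        obtain ⟨hc₁b, hc₁as⟩ := (hCmem c₁).mp hc₁C
        have hjZ1 : j ∉ Finset.univ \ insert c₁ aset := by
          intro h
          have heq := block_eq hPp hZ1P hBP h hjB
          have hi1 : i ∈ Finset.univ \ insert c₁ aset := by rw [heq]; exact hiB
          simp only [Finset.mem_sdiff, Finset.mem_univ, Finset.mem_insert, true_and,
            not_or] at hi1
          exact hi1.2 hias
        have hjas : j ∈ aset := by
          simp only [Finset.mem_sdiff, Finset.mem_univ, Finset.mem_insert, true_and,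
            not_or, not_and, not_not] at hjZ1
          exact hjZ1 (fun h => hc₁j h.symm)
        have hnoC : ∀ c ∈ Cset, ({c} : Finset (Fin n)) ∉ P := by
          intro c hc hcP2
          obtain ⟨hcb, hcas⟩ := (hCmem c).mp hc
          by_cases hcc : c = c₁
          · exact hc₁P (hcc ▸ hcP2)
          · have hcZ : c ∈ Finset.univ \ insert c₁ aset := by
              simp only [Finset.mem_sdiff, Finset.mem_univ, Finset.mem_insert, true_and, not_or]
              exact ⟨hcc, hcas⟩
            have heq := block_eq hPp hcP2 hZ1P (Finset.mem_singleton_self c) hcZ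
            have : b ∈ ({c} : Finset (Fin n)) := by rw [heq]; exact hbZc c₁ hc₁b
            exact hcb (Finset.mem_singleton.mp this).symm
        have hpair : ({a p, b} : Finset (Fin n)) ∉ P := by
          intro h
          have heq := block_eq hPp h hBP (by simp) hapB
          have : j ∈ ({a p, b} : Finset (Fin n)) := by rw [heq]; exact hjB
          rcases Finset.mem_insert.mp this with h5 | h5
          · exact hjne (h5.trans hipv.symm)
          · exact hb_aset ((Finset.mem_singleton.mp h5) ▸ hjas)
        exact contra P hPA _ hQpA (aset.erase (a p)) hcontra_p (hQcov hnoC hpair)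
      · -- I-F (b)
        have hfail2 : ∀ c ∈ Cset, c ≠ j → ({c} : Finset (Fin n)) ∉ P →
            insert i (Finset.univ \ insert c aset) ∈ P := by
          intro c hc hcj hcP
          rcases hfail c hc hcj hcP with h | h
          · exact absurd ⟨c, hc, hcj, hcP, h⟩ hexc
          · exact h
        by_cases hc2 : ∃ c₂ ∈ Cset, c₂ ≠ j ∧ ({c₂} : Finset (Fin n)) ∉ P
        · -- I-F (b1)
          obtain ⟨c₂, hc₂C, hc₂j, hc₂P⟩ := hc2
          obtain ⟨hc₂b, hc₂as⟩ := (hCmem c₂).mp hc₂C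
          have hB2 : insert i (Finset.univ \ insert c₂ aset) = B :=
            block_eq hPp (hfail2 c₂ hc₂C hc₂j hc₂P) hBP (Finset.mem_insert_self _ _) hiB
          have hCsub : ∀ c ∈ Cset, c = c₂ ∨ c = j := by
            intro c hc
            by_contra h
            push_neg at h
            obtain ⟨hcc2, hcj⟩ := h
            obtain ⟨hcb, hcas⟩ := (hCmem c).mp hc
            have hcB : c ∈ B := by
              rw [← hB2]
              apply Finset.mem_insert_of_mem
              simp only [Finset.mem_sdiff, Finset.mem_univ, Finset.mem_insert, true_and, not_or]
              exact ⟨hcc2, hcas⟩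
            have hcP : ({c} : Finset (Fin n)) ∉ P := hsingB c hcB
            have hB4 : insert i (Finset.univ \ insert c aset) = B :=
              block_eq hPp (hfail2 c hc hcj hcP) hBP (Finset.mem_insert_self _ _) hiB
            have hcmem : c ∈ insert i (Finset.univ \ insert c aset) := by
              rw [hB4]; exact hcB
            rcases Finset.mem_insert.mp hcmem with h5 | h5
            · exact hcas (by rw [h5]; exact hias)
            · simp at h5
          have hjC : j ∈ Cset := by
            obtain ⟨c'', hc''C, hc''ne⟩ := Finset.exists_mem_ne (s := Cset)
              (by omega) c₂
            rcases hCsub c'' hc''C with h | h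
            · exact absurd h hc''ne
            · exact h ▸ hc''C
          obtain ⟨hjb, hjas'⟩ := (hCmem j).mp hjC
          have hnoC : ∀ c ∈ Cset, ({c} : Finset (Fin n)) ∉ P := by
            intro c hc
            rcases hCsub c hc with rfl | rfl
            · exact hc₂P
            · exact hjP
          have hpair : ({a p, b} : Finset (Fin n)) ∉ P := by
            intro h
            have heq := block_eq hPp h hBP (by simp) hapB
            have : j ∈ ({a p, b} : Finset (Fin n)) := by rw [heq]; exact hjB
            rcases Finset.mem_insert.mp this with h5 | h5
            · exact hjne (h5.trans hipv.symm)
            · exact hjb (Finset.mem_singleton.mp h5)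
          exact contra P hPA _ hQpA (aset.erase (a p)) hcontra_p (hQcov hnoC hpair)
        · -- I-F (b2)
          push_neg at hc2
          by_cases hjC : j ∈ Cset
          · -- witness j clump
            obtain ⟨hjb, hjas'⟩ := (hCmem j).mp hjC
            set S : Finset (Finset (Fin n)) :=
              sgs (insert j aset) ∪ {Finset.univ \ insert j aset} with hS_def
            have hSH : S ∈ HM a b := hT_HM j hjas' hjb
            obtain ⟨c'', hc''C, hc''j⟩ := Finset.exists_mem_ne (s := Cset)
              (by omega) j
            obtain ⟨hc''b, hc''as⟩ := (hCmem c'').mp hc''C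
            have hc''P : ({c''} : Finset (Fin n)) ∈ P := hc2 c'' hc''C hc''j
            have hZjP : Finset.univ \ insert j aset ∉ P := by
              intro h
              have hc''Z : c'' ∈ Finset.univ \ insert j aset := by
                simp only [Finset.mem_sdiff, Finset.mem_univ, Finset.mem_insert, true_and,
                  not_or]
                exact ⟨hc''j, hc''as⟩
              have heq := block_eq hPp hc''P h (Finset.mem_singleton_self c'') hc''Z
              have : b ∈ ({c''} : Finset (Fin n)) := by rw [heq]; exact hbZc j hjb
              exact hc''b (Finset.mem_singleton.mp this).symm
            by_cases hSA : S ∈ A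
            · refine contra P hPA _ hSA (aset.erase (a p)) hcontra_p ?_
              intro y hyP hyT
              rcases Finset.mem_union.mp hyT with h | h
              · obtain ⟨w, hw, rfl⟩ := mem_sgs.mp h
                rcases Finset.mem_insert.mp hw with hwj | hwa
                · exact absurd (hwj ▸ hyP) hjP
                · exact ⟨w, Finset.mem_erase.mpr ⟨fun h0 => hapP (h0 ▸ hyP), hwa⟩, rfl⟩
              · exfalso
                simp only [Finset.mem_singleton] at h
                exact hZjP (h ▸ hyP)
            · have hjS : ({j} : Finset (Fin n)) ∈ S :=
                Finset.mem_union_left _ (mem_sgs.mpr ⟨j, Finset.mem_insert_self _ _, rfl⟩)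
              have hMA := hW2 S _ hSH hSA hjS (Finset.mem_singleton_self j)
              refine contra _ hMA _ hQpA (aset.erase (a p)) hcontra_p ?_
              intro y hyM hyQ
              rcases mem_Qpart.mp hyQ with rfl | ⟨w, hw1, hw2, rfl⟩
              · exfalso
                rcases Finset.mem_union.mp hyM with h2 | h2
                · have h3 := (Finset.mem_sdiff.mp h2).1
                  rcases Finset.mem_union.mp h3 with h4 | h4
                  · obtain ⟨w', hw', hww⟩ := mem_sgs.mp h4
                    have hb2 : b ∈ ({w'} : Finset (Fin n)) := by rw [← hww]; simp
                    have hp2 : a p ∈ ({w'} : Finset (Fin n)) := by rw [← hww]; simp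
                    exact hab p ((Finset.mem_singleton.mp hp2).trans
                      (Finset.mem_singleton.mp hb2).symm)
                  · simp only [Finset.mem_singleton] at h4
                    have : a p ∈ Finset.univ \ insert j aset := by rw [← h4]; simp
                    simp only [Finset.mem_sdiff, Finset.mem_univ, Finset.mem_insert, true_and,
                      not_or] at this
                    exact this.2 ((hmem_aset _).mpr ⟨p, rfl⟩)
                · simp only [Finset.mem_singleton] at h2
                  have : b ∈ insert i ({j} : Finset (Fin n)) := by rw [← h2]; simp
                  rcases Finset.mem_insert.mp this with h5 | h5
                  · exact hib h5.symm
                  · exact hjb (Finset.mem_singleton.mp h5).symm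
              · rcases Finset.mem_union.mp hyM with h2 | h2
                · have h3 := Finset.mem_sdiff.mp h2
                  simp only [Finset.mem_insert, Finset.mem_singleton, not_or] at h3
                  rcases Finset.mem_union.mp h3.1 with h4 | h4
                  · obtain ⟨w', hw', hww⟩ := mem_sgs.mp h4
                    have hwweq : w = w' := Finset.singleton_injective hww
                    subst hwweq
                    rcases Finset.mem_insert.mp hw' with hwj | hwa
                    · exact absurd (by rw [hwj]) h3.2.2
                    · exact ⟨w, Finset.mem_erase.mpr ⟨hw1, hwa⟩, rfl⟩
                  · exfalso
                    simp only [Finset.mem_singleton] at h4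
                    have : b ∈ ({w} : Finset (Fin n)) := by rw [h4]; exact hbZc j hjb
                    exact hw2 (Finset.mem_singleton.mp this).symm
                · exfalso
                  simp only [Finset.mem_singleton] at h2
                  have hi2 : i ∈ ({w} : Finset (Fin n)) := by
                    rw [h2]; exact Finset.mem_insert_self _ _
                  have hj2 : j ∈ ({w} : Finset (Fin n)) := by
                    rw [h2]; exact Finset.mem_insert_of_mem (Finset.mem_singleton_self _)
                  exact hij ((Finset.mem_singleton.mp hi2).trans
                    (Finset.mem_singleton.mp hj2).symm)
          · -- j ∉ Cset : every Cset element is a P-singleton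
            have hcall : ∀ c ∈ Cset, ({c} : Finset (Fin n)) ∈ P := by
              intro c hc
              apply hc2 c hc
              intro h0
              exact hjC (h0 ▸ hc)
            obtain ⟨c, hcC⟩ := Finset.card_pos.mp (by omega : 0 < Cset.card)
            obtain ⟨hcb, hcas⟩ := (hCmem c).mp hcC
            obtain ⟨c'', hc''C, hc''c⟩ := Finset.exists_mem_ne (s := Cset)
              (by omega) c
            obtain ⟨hc''b, hc''as⟩ := (hCmem c'').mp hc''C
            have hc''P : ({c''} : Finset (Fin n)) ∈ P := hcall c'' hc''C
            have hc''Zc : c'' ∈ Finset.univ \ insert c aset := by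
              simp only [Finset.mem_sdiff, Finset.mem_univ, Finset.mem_insert, true_and, not_or]
              exact ⟨hc''c, hc''as⟩
            have hZcP : Finset.univ \ insert c aset ∉ P := by
              intro h
              have heq := block_eq hPp hc''P h (Finset.mem_singleton_self c'') hc''Zc
              have : b ∈ ({c''} : Finset (Fin n)) := by rw [heq]; exact hbZc c hcb
              exact hc''b (Finset.mem_singleton.mp this).symm
            set S : Finset (Finset (Fin n)) :=
              sgs (insert c aset) ∪ {Finset.univ \ insert c aset} with hS_def
            have hSH : S ∈ HM a b := hT_HM c hcas hcb
            by_cases hjb : j = b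
            · -- j = b
              by_cases hk2 : ∃ k, a k ≠ a p ∧ ({a k} : Finset (Fin n)) ∉ P
              · obtain ⟨k, hkp, hkP⟩ := hk2
                have hs'card : (insert c ((aset.erase (a p)).erase (a k))).card + 1 ≤ t := by
                  have h1 : ((aset.erase (a p)).erase (a k)).card = t - 2 := by
                    rw [Finset.card_erase_of_mem
                      (Finset.mem_erase.mpr ⟨hkp, (hmem_aset _).mpr ⟨k, rfl⟩⟩),
                      Finset.card_erase_of_mem ((hmem_aset _).mpr ⟨p, rfl⟩), haset_card]
                    omega
                  have h2 := Finset.card_insert_le c ((aset.erase (a p)).erase (a k))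
                  have hkq : k ≠ p := fun h => hkp (by rw [h])
                  have h3 : 2 ≤ t := by
                    by_contra h
                    push_neg at h
                    apply hkq
                    have hk' := k.isLt
                    have hq' := p.isLt
                    apply Fin.ext
                    omega
                  omega
                have hcov2 : ∀ y : Finset (Fin n), y ∈ P → y ∈ S → y ≠ Finset.univ \ insert c aset →
                    ∃ w ∈ insert c ((aset.erase (a p)).erase (a k)), y = {w} := by
                  intro y hyP hyS hyne
                  rcases Finset.mem_union.mp hyS with h | h
                  · obtain ⟨w, hw, rfl⟩ := mem_sgs.mp h
                    rcases Finset.mem_insert.mp hw with hwc | hwa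
                    · exact ⟨w, by rw [hwc]; exact Finset.mem_insert_self c _, rfl⟩
                    · refine ⟨w, Finset.mem_insert_of_mem (Finset.mem_erase.mpr
                        ⟨fun h0 => hkP (h0 ▸ hyP), Finset.mem_erase.mpr
                          ⟨fun h0 => hapP (h0 ▸ hyP), hwa⟩⟩), rfl⟩
                  · simp only [Finset.mem_singleton] at h
                    exact absurd h hyne
                by_cases hSA : S ∈ A
                · refine contra P hPA _ hSA _ hs'card ?_
                  intro y hyP hyS
                  exact hcov2 y hyP hyS (fun h => hZcP (h ▸ hyP))
                · have hjZc : j ∈ Finset.univ \ insert c aset := by rw [hjb]; exact hbZc c hcb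
                  have hMA := hW2 S _ hSH hSA
                    (Finset.mem_union_right _ (Finset.mem_singleton_self _)) hjZc
                  refine contra P hPA _ hMA _ hs'card ?_
                  intro y hyP hyM
                  rcases Finset.mem_union.mp hyM with h2 | h2
                  · have h3 := Finset.mem_sdiff.mp h2
                    simp only [Finset.mem_insert, Finset.mem_singleton, not_or] at h3
                    exact hcov2 y hyP h3.1 h3.2.2
                  · exfalso
                    simp only [Finset.mem_singleton] at h2
                    have heq := block_eq hPp (h2 ▸ hyP) hBP (Finset.mem_insert_self _ _) hiB
                    have hc''B : c'' ∈ B := by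
                      rw [← heq]
                      exact Finset.mem_insert_of_mem hc''Zc
                    exact hsingB c'' hc''B hc''P
              · -- P = Qpart (a p) b
                push_neg at hk2
                apply hPQ p
                have hBsub : B = {a p, b} := by
                  apply Finset.Subset.antisymm
                  · intro x hx
                    have hxP2 : ({x} : Finset (Fin n)) ∉ P := hsingB x hx
                    have hxC : x ∉ Cset := fun h => hxP2 (hcall x h)
                    simp only [Finset.mem_insert, Finset.mem_singleton]
                    by_cases hxb2 : x = b
                    · exact Or.inr hxb2
                    · have hxas : x ∈ aset := by
                        by_contra h
                        exact hxC ((hCmem x).mpr ⟨hxb2, h⟩)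
                      obtain ⟨l, hl⟩ := (hmem_aset x).mp hxas
                      left
                      by_contra h0
                      apply hxP2
                      rw [← hl]
                      apply hk2 l
                      intro h4
                      exact h0 (h4 ▸ hl.symm ▸ rfl)
                  · intro x hx
                    rcases Finset.mem_insert.mp hx with rfl | hx2
                    · exact hapB
                    · rw [Finset.mem_singleton.mp hx2]
                      exact hjb ▸ hjB
                refine (part_subset_eq hPp (Qpart_isPart (hab p)) ?_).symm
                intro z hz
                rcases mem_Qpart.mp hz with rfl | ⟨w, hw1, hw2, rfl⟩
                · rw [← hBsub]; exact hBP
                · by_cases hwas : w ∈ aset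
                  · obtain ⟨l, hl⟩ := (hmem_aset w).mp hwas
                    rw [← hl]
                    apply hk2 l
                    intro h4
                    exact hw1 (h4 ▸ hl.symm ▸ rfl)
                  · exact hcall w ((hCmem w).mpr ⟨hw2, hwas⟩)
            · -- j ≠ b : then j ∈ aset
              have hjas : j ∈ aset := by
                by_contra h
                exact hjC ((hCmem j).mpr ⟨hjb, h⟩)
              have hs'card : (insert c ((aset.erase (a p)).erase j)).card + 1 ≤ t := by
                have h1 : ((aset.erase (a p)).erase j).card = t - 2 := by
                  rw [Finset.card_erase_of_mem
                    (Finset.mem_erase.mpr ⟨fun h => hjne (h.trans hipv.symm), hjas⟩),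
                    Finset.card_erase_of_mem ((hmem_aset _).mpr ⟨p, rfl⟩), haset_card]
                  omega
                have h2 := Finset.card_insert_le c ((aset.erase (a p)).erase j)
                have h3 : 2 ≤ t := by
                  obtain ⟨q, hjq⟩ := (hmem_aset j).mp hjas
                  have hpq : p ≠ q := fun h => hjne (by rw [← hjq, ← h, ← hipv])
                  by_contra h
                  push_neg at h
                  apply hpq
                  have hp' := p.isLt
                  have hq' := q.isLt
                  apply Fin.ext
                  omega
                omega
              by_cases hSA : S ∈ A
              · refine contra P hPA _ hSA _ hs'card ?_
                intro y hyP hyS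
                rcases Finset.mem_union.mp hyS with h | h
                · obtain ⟨w, hw, rfl⟩ := mem_sgs.mp h
                  rcases Finset.mem_insert.mp hw with hwc | hwa
                  · exact ⟨w, by rw [hwc]; exact Finset.mem_insert_self c _, rfl⟩
                  · refine ⟨w, Finset.mem_insert_of_mem (Finset.mem_erase.mpr
                      ⟨fun h0 => hjP (h0 ▸ hyP), Finset.mem_erase.mpr
                        ⟨fun h0 => hapP (h0 ▸ hyP), hwa⟩⟩), rfl⟩
                · exfalso
                  simp only [Finset.mem_singleton] at h
                  exact hZcP (h ▸ hyP)
              · have hjS : ({j} : Finset (Fin n)) ∈ S :=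
                  Finset.mem_union_left _ (mem_sgs.mpr ⟨j, Finset.mem_insert_of_mem hjas, rfl⟩)
                have hMA := hW2 S _ hSH hSA hjS (Finset.mem_singleton_self j)
                refine contra _ hMA _ hQpA _ hs'card ?_
                intro y hyM hyQ
                rcases mem_Qpart.mp hyQ with rfl | ⟨w, hw1, hw2, rfl⟩
                · exfalso
                  rcases Finset.mem_union.mp hyM with h2 | h2
                  · have h3 := (Finset.mem_sdiff.mp h2).1
                    rcases Finset.mem_union.mp h3 with h4 | h4
                    · obtain ⟨w', hw', hww⟩ := mem_sgs.mp h4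
                      have hb2 : b ∈ ({w'} : Finset (Fin n)) := by rw [← hww]; simp
                      have hp2 : a p ∈ ({w'} : Finset (Fin n)) := by rw [← hww]; simp
                      exact hab p ((Finset.mem_singleton.mp hp2).trans
                        (Finset.mem_singleton.mp hb2).symm)
                    · simp only [Finset.mem_singleton] at h4
                      have : a p ∈ Finset.univ \ insert c aset := by rw [← h4]; simp
                      simp only [Finset.mem_sdiff, Finset.mem_univ, Finset.mem_insert, true_and,
                        not_or] at this
                      exact this.2 ((hmem_aset _).mpr ⟨p, rfl⟩)
                  · simp only [Finset.mem_singleton] at h2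
                    have : b ∈ insert i ({j} : Finset (Fin n)) := by rw [← h2]; simp
                    rcases Finset.mem_insert.mp this with h5 | h5
                    · exact hib h5.symm
                    · exact hjb (Finset.mem_singleton.mp h5).symm
                · rcases Finset.mem_union.mp hyM with h2 | h2
                  · have h3 := Finset.mem_sdiff.mp h2
                    simp only [Finset.mem_insert, Finset.mem_singleton, not_or] at h3
                    rcases Finset.mem_union.mp h3.1 with h4 | h4
                    · obtain ⟨w', hw', hww⟩ := mem_sgs.mp h4
                      have hwweq : w = w' := Finset.singleton_injective hww
                      subst hwweq
                      rcases Finset.mem_insert.mp hw' with hwc | hwa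
                      · exact ⟨w, by rw [hwc]; exact Finset.mem_insert_self c _, rfl⟩
                      · refine ⟨w, Finset.mem_insert_of_mem (Finset.mem_erase.mpr
                          ⟨?_, Finset.mem_erase.mpr ⟨hw1, hwa⟩⟩), rfl⟩
                        intro h0
                        exact h3.2.2 (by rw [h0])
                    · exfalso
                      simp only [Finset.mem_singleton] at h4
                      have : b ∈ ({w} : Finset (Fin n)) := by rw [h4]; exact hbZc c hcb
                      exact hw2 (Finset.mem_singleton.mp this).symm
                  · exfalso
                    simp only [Finset.mem_singleton] at h2
                    have hi2 : i ∈ ({w} : Finset (Fin n)) := by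
                      rw [h2]; exact Finset.mem_insert_self _ _
                    have hj2 : j ∈ ({w} : Finset (Fin n)) := by
                      rw [h2]; exact Finset.mem_insert_of_mem (Finset.mem_singleton_self _)
                    exact hij ((Finset.mem_singleton.mp hi2).trans
                      (Finset.mem_singleton.mp hj2).symm)
  · have hia : i ∉ aset := by
      rw [hmem_aset]; rintro ⟨k, hk⟩; exact hip ⟨k, hk.symm⟩
    by_cases hib : i = b
    · -- CASE II : i = b
      have hbP : ({b} : Finset (Fin n)) ∉ P := by rw [← hib]; exact hiP
      have hbB : b ∈ B := hib ▸ hiB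
      have hjb : j ≠ b := fun h => hjne (h.trans hib.symm)
      have hQA : ∀ k, Qpart (a k) b ∈ A := by
        intro k
        apply hW1 _ (Qpart_mem_HM k)
        intro hmem2
        rcases mem_Qpart.mp hmem2 with h | ⟨w, hw1, hw2, h⟩
        · have : a k ∈ ({i} : Finset (Fin n)) := by rw [h]; simp
          exact hab k (by rw [Finset.mem_singleton.mp this, hib])
        · have hwi : w = i := Finset.singleton_injective h.symm
          exact hw2 (hwi.trans hib)
      set Cset : Finset (Fin n) := Finset.univ \ insert b aset with hCset_def
      have hCmem : ∀ c, c ∈ Cset ↔ c ≠ b ∧ c ∉ aset := by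
        intro c
        simp only [hCset_def, Finset.mem_sdiff, Finset.mem_univ, Finset.mem_insert, true_and,
          not_or]
      have hC2 : 2 ≤ Cset.card := by
        rw [hCset_def, hcard_compl]
        have := hcard_ins b
        omega
      have hTA : ∀ c, c ∈ Cset → (sgs (insert c aset) ∪ {Finset.univ \ insert c aset}) ∈ A := by
        intro c hcC
        obtain ⟨hcb, hcas⟩ := (hCmem c).mp hcC
        apply hW1 _ (hT_HM c hcas hcb)
        intro hmem2
        rcases Finset.mem_union.mp hmem2 with h | h
        · obtain ⟨w, hw, hww⟩ := mem_sgs.mp h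
          have hiw : i = w := Finset.singleton_injective hww
          rcases Finset.mem_insert.mp hw with h2 | h2
          · exact hcb ((h2.symm.trans hiw.symm).trans hib)
          · exact hb_aset (by rw [← hib, hiw]; exact h2)
        · simp only [Finset.mem_singleton] at h
          obtain ⟨c'', hc''C, hc''ne⟩ := Finset.exists_mem_ne (s := Cset) (by omega) c
          obtain ⟨hc''b, hc''as⟩ := (hCmem c'').mp hc''C
          have : c'' ∈ ({i} : Finset (Fin n)) := by
            rw [h]
            simp only [Finset.mem_sdiff, Finset.mem_univ, Finset.mem_insert, true_and, not_or]
            exact ⟨hc''ne, hc''as⟩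
          exact hc''b ((Finset.mem_singleton.mp this).trans hib)
      by_cases hw0 : ∃ x : Fin n, ({x} : Finset (Fin n)) ∈ P ∧ x ∉ aset
      · -- II-2 : there is a singleton outside aset
        obtain ⟨x, hxP, hxas⟩ := hw0
        have hxb : x ≠ b := fun h => hbP (h ▸ hxP)
        have halt : ∃ m, ({a m} : Finset (Fin n)) ∉ P := by
          by_contra h
          push_neg at h
          exact hPH1 ⟨h, x, fun k hk => hxas ((hmem_aset x).mpr ⟨k, hk.symm⟩), hxb, hxP⟩
        obtain ⟨m, hm⟩ := halt
        have hcontra_m : (aset.erase (a m)).card + 1 ≤ t := by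
          have := herase_card (a m) ((hmem_aset _).mpr ⟨m, rfl⟩)
          omega
        by_cases hgood : ∃ c ∈ Cset, ({c} : Finset (Fin n)) ∉ P ∧
            Finset.univ \ insert c aset ≠ B
        · obtain ⟨c, hcC, hcP, hZB⟩ := hgood
          obtain ⟨hcb, hcas⟩ := (hCmem c).mp hcC
          refine contra P hPA _ (hTA c hcC) (aset.erase (a m)) hcontra_m ?_
          intro y hyP hyT
          rcases Finset.mem_union.mp hyT with h | h
          · obtain ⟨w, hw, rfl⟩ := mem_sgs.mp h
            rcases Finset.mem_insert.mp hw with hwc | hwa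
            · exact absurd (hwc ▸ hyP) hcP
            · exact ⟨w, Finset.mem_erase.mpr ⟨fun h0 => hm (h0 ▸ hyP), hwa⟩, rfl⟩
          · exfalso
            simp only [Finset.mem_singleton] at h
            subst h
            exact hZB (block_eq hPp hyP hBP (hbZc c hcb) hbB)
        · have hfail : ∀ c ∈ Cset, ({c} : Finset (Fin n)) ∉ P →
              Finset.univ \ insert c aset = B := by
            intro c hc hcP
            by_contra hne3
            exact hgood ⟨c, hc, hcP, hne3⟩
          by_cases hc0 : ∃ c₀ ∈ Cset, ({c₀} : Finset (Fin n)) ∉ P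
          · exfalso
            obtain ⟨c₀, hc₀C, hc₀P⟩ := hc0
            have hB0 := hfail c₀ hc₀C hc₀P
            obtain ⟨c'', hc''C, hc''ne⟩ := Finset.exists_mem_ne (s := Cset) (by omega) c₀
            obtain ⟨hc''b, hc''as⟩ := (hCmem c'').mp hc''C
            have hc''B : c'' ∈ B := by
              rw [← hB0]
              simp only [Finset.mem_sdiff, Finset.mem_univ, Finset.mem_insert, true_and, not_or]
              exact ⟨hc''ne, hc''as⟩
            have h2 := hfail c'' hc''C (hsingB c'' hc''B)
            have h3 : c'' ∈ Finset.univ \ insert c'' aset := by rw [h2]; exact hc''B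
            simp at h3
          · push_neg at hc0
            have hjC : j ∉ Cset := fun h => hjP (hc0 j h)
            have hjas : j ∈ aset := by
              by_contra h
              exact hjC ((hCmem j).mpr ⟨hjb, h⟩)
            obtain ⟨q, hjq⟩ := (hmem_aset j).mp hjas
            by_cases hk2 : ∃ k, a k ≠ j ∧ ({a k} : Finset (Fin n)) ∉ P
            · obtain ⟨k, hkj, hkP⟩ := hk2
              obtain ⟨c, hcC⟩ := Finset.card_pos.mp (by omega : 0 < Cset.card)
              obtain ⟨hcb, hcas⟩ := (hCmem c).mp hcC
              have hs'card : (insert c ((aset.erase j).erase (a k))).card + 1 ≤ t := by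
                have h1 : ((aset.erase j).erase (a k)).card = t - 2 := by
                  rw [Finset.card_erase_of_mem
                    (Finset.mem_erase.mpr ⟨hkj, (hmem_aset _).mpr ⟨k, rfl⟩⟩),
                    Finset.card_erase_of_mem hjas, haset_card]
                  omega
                have h2 := Finset.card_insert_le c ((aset.erase j).erase (a k))
                have hkq : k ≠ q := fun h => hkj (h ▸ hjq)
                have h3 : 2 ≤ t := by
                  by_contra h
                  push_neg at h
                  apply hkq
                  have hk' := k.isLt
                  have hq' := q.isLt
                  apply Fin.ext
                  omega
                omega
              refine contra P hPA _ (hTA c hcC) _ hs'card ?_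
              intro y hyP hyT
              rcases Finset.mem_union.mp hyT with h | h
              · obtain ⟨w, hw, rfl⟩ := mem_sgs.mp h
                rcases Finset.mem_insert.mp hw with hwc | hwa
                · exact ⟨w, by rw [hwc]; exact Finset.mem_insert_self c _, rfl⟩
                · refine ⟨w, Finset.mem_insert_of_mem (Finset.mem_erase.mpr
                    ⟨?_, Finset.mem_erase.mpr ⟨?_, hwa⟩⟩), rfl⟩
                  · intro h0
                    exact hkP (h0 ▸ hyP)
                  · intro h0
                    exact hjP (h0 ▸ hyP)
              · exfalso
                simp only [Finset.mem_singleton] at h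
                subst h
                have heq := block_eq hPp hyP hBP (hbZc c hcb) hbB
                obtain ⟨c'', hc''C, hc''ne⟩ := Finset.exists_mem_ne (s := Cset) (by omega) c
                obtain ⟨hc''b, hc''as⟩ := (hCmem c'').mp hc''C
                have hc''B : c'' ∈ B := by
                  rw [← heq]
                  simp only [Finset.mem_sdiff, Finset.mem_univ, Finset.mem_insert, true_and,
                    not_or]
                  exact ⟨hc''ne, hc''as⟩
                exact hsingB c'' hc''B (hc0 c'' hc''C)
            · -- P equals Qpart (a q) b : contradiction
              push_neg at hk2
              apply hPQ q
              have hBsub : B = {a q, b} := by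
                apply Finset.Subset.antisymm
                · intro x hx
                  have hxP2 : ({x} : Finset (Fin n)) ∉ P := hsingB x hx
                  have hxC : x ∉ Cset := fun h => hxP2 (hc0 x h)
                  simp only [Finset.mem_insert, Finset.mem_singleton]
                  by_cases hxb2 : x = b
                  · exact Or.inr hxb2
                  · have hxas : x ∈ aset := by
                      by_contra h
                      exact hxC ((hCmem x).mpr ⟨hxb2, h⟩)
                    obtain ⟨l, hl⟩ := (hmem_aset x).mp hxas
                    left
                    by_contra h0
                    apply hxP2
                    rw [← hl]
                    apply hk2 l
                    rw [hl, ← hjq]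
                    intro h4
                    exact h0 (h4 ▸ hl.symm ▸ rfl)
                · intro x hx
                  rcases Finset.mem_insert.mp hx with rfl | hx2
                  · exact hjq ▸ hjB
                  · rw [Finset.mem_singleton.mp hx2]
                    exact hbB
              refine (part_subset_eq hPp (Qpart_isPart (hab q)) ?_).symm
              intro z hz
              rcases mem_Qpart.mp hz with rfl | ⟨w, hw1, hw2, rfl⟩
              · rw [← hBsub]; exact hBP
              · by_cases hwas : w ∈ aset
                · obtain ⟨l, hl⟩ := (hmem_aset w).mp hwas
                  rw [← hl]
                  apply hk2 l
                  rw [hl, ← hjq]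
                  intro h4
                  exact hw1 (h4 ▸ hl.symm ▸ rfl)
                · exact hc0 w ((hCmem w).mpr ⟨hw2, hwas⟩)
      · -- II-1 : every singleton of P lies in aset
        push_neg at hw0
        have hW : ∀ x : Fin n, ({x} : Finset (Fin n)) ∈ P → x ∈ aset := hw0
        by_cases hallP : ∀ k, ({a k} : Finset (Fin n)) ∈ P
        · set k0 : Fin t := ⟨0, ht⟩ with hk0_def
          have hcontra_k0 : (aset.erase (a k0)).card + 1 ≤ t := by
            have := herase_card (a k0) ((hmem_aset _).mpr ⟨k0, rfl⟩)
            omega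
          refine contra P hPA _ (hQA k0) (aset.erase (a k0)) hcontra_k0 ?_
          intro y hyP hyQ
          rcases mem_Qpart.mp hyQ with rfl | ⟨w, hw1, hw2, rfl⟩
          · exfalso
            have heq := block_eq hPp hyP (hallP k0) (by simp) (Finset.mem_singleton_self _)
            have : b ∈ ({a k0} : Finset (Fin n)) := by rw [← heq]; simp
            exact hab k0 (Finset.mem_singleton.mp this).symm
          · exact ⟨w, Finset.mem_erase.mpr ⟨hw1, hW w hyP⟩, rfl⟩
        · push_neg at hallP
          obtain ⟨q, hqP⟩ := hallP
          have hcontra_q : (aset.erase (a q)).card + 1 ≤ t := by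
            have := herase_card (a q) ((hmem_aset _).mpr ⟨q, rfl⟩)
            omega
          by_cases hqj : a q = j
          · by_cases hpair : ({a q, b} : Finset (Fin n)) ∈ P
            · have hpairB : ({a q, b} : Finset (Fin n)) = B :=
                block_eq hPp hpair hBP (by simp) hbB
              obtain ⟨c, hcC⟩ := Finset.card_pos.mp (by omega : 0 < Cset.card)
              obtain ⟨hcb, hcas⟩ := (hCmem c).mp hcC
              refine contra P hPA _ (hTA c hcC) (aset.erase (a q)) hcontra_q ?_
              intro y hyP hyT
              rcases Finset.mem_union.mp hyT with h | h
              · obtain ⟨w, hw, rfl⟩ := mem_sgs.mp h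
                rcases Finset.mem_insert.mp hw with hwc | hwa
                · exact absurd (hW w hyP) (hwc ▸ hcas)
                · refine ⟨w, Finset.mem_erase.mpr ⟨fun h0 => hqP (h0 ▸ hyP), hwa⟩, rfl⟩
              · exfalso
                simp only [Finset.mem_singleton] at h
                subst h
                have heq := block_eq hPp hyP hBP (hbZc c hcb) hbB
                have : a q ∈ Finset.univ \ insert c aset := by
                  rw [heq, ← hpairB]; simp
                simp only [Finset.mem_sdiff, Finset.mem_univ, Finset.mem_insert, true_and,
                  not_or] at this
                exact this.2 ((hmem_aset _).mpr ⟨q, rfl⟩)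
            · refine contra P hPA _ (hQA q) (aset.erase (a q)) hcontra_q ?_
              intro y hyP hyQ
              rcases mem_Qpart.mp hyQ with rfl | ⟨w, hw1, hw2, rfl⟩
              · exact absurd hyP hpair
              · exact ⟨w, Finset.mem_erase.mpr ⟨hw1, hW w hyP⟩, rfl⟩
          · refine contra P hPA _ (hQA q) (aset.erase (a q)) hcontra_q ?_
            intro y hyP hyQ
            rcases mem_Qpart.mp hyQ with rfl | ⟨w, hw1, hw2, rfl⟩
            · exfalso
              have heq := block_eq hPp hyP hBP (by simp) hbB
              have : j ∈ ({a q, b} : Finset (Fin n)) := by rw [heq]; exact hjB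
              rcases Finset.mem_insert.mp this with h | h
              · exact hqj h.symm
              · exact hjb (Finset.mem_singleton.mp h)
            · exact ⟨w, Finset.mem_erase.mpr ⟨hw1, hW w hyP⟩, rfl⟩
    · -- CASE III : i ∉ aset, i ≠ b
      have hiZc : ∀ c : Fin n, c ≠ i → i ∈ Finset.univ \ insert c aset := by
        intro c hc
        simp only [Finset.mem_sdiff, Finset.mem_univ, Finset.mem_insert, true_and, not_or]
        exact ⟨fun h => hc h.symm, hia⟩
      have hiT : ∀ c : Fin n, c ≠ i → c ≠ b →
          ({i} : Finset (Fin n)) ∉ (sgs (insert c aset) ∪ {Finset.univ \ insert c aset}) := by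
        intro c hc hcb hmem2
        rcases Finset.mem_union.mp hmem2 with h | h
        · obtain ⟨w, hw, hw2⟩ := mem_sgs.mp h
          have : i = w := Finset.singleton_injective hw2
          subst this
          rcases Finset.mem_insert.mp hw with h2 | h2
          · exact hc h2.symm
          · exact hia h2
        · simp only [Finset.mem_singleton] at h
          have : b ∈ ({i} : Finset (Fin n)) := by rw [h]; exact hbZc c hcb
          exact hib (Finset.mem_singleton.mp this).symm
      set Cset : Finset (Fin n) := Finset.univ \ insert b (insert i aset) with hCset_def
      have hCmem : ∀ c, c ∈ Cset ↔ c ≠ b ∧ c ≠ i ∧ c ∉ aset := by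
        intro c
        simp only [hCset_def, Finset.mem_sdiff, Finset.mem_univ, Finset.mem_insert, true_and,
          not_or]
      have hC1 : 1 ≤ Cset.card := by
        rw [hCset_def, hcard_compl]
        have h1 : (insert b (insert i aset)).card ≤ t + 2 := by
          calc (insert b (insert i aset)).card ≤ (insert i aset).card + 1 :=
                Finset.card_insert_le _ _
            _ ≤ t + 2 := by have := hcard_ins i; omega
        omega
      by_cases hall : ∀ k, ({a k} : Finset (Fin n)) ∈ P
      · -- III-A : all a-singletons present
        have hw : ∀ c : Fin n, (∀ k, c ≠ a k) → c ≠ b → ({c} : Finset (Fin n)) ∉ P :=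
          fun c h1 h2 h3 => hPH1 ⟨hall, c, h1, h2, h3⟩
        have haB : ∀ k, a k ∉ B := fun k hk => hsingB (a k) hk (hall k)
        have hsingP : ∀ w : Fin n, ({w} : Finset (Fin n)) ∈ P → w ≠ b → ∃ k, w = a k := by
          intro w hw2 hwb
          by_cases h2 : ∃ k, w = a k
          · exact h2
          · push_neg at h2
            exact absurd hw2 (hw w h2 hwb)
        set k0 : Fin t := ⟨0, ht⟩ with hk0_def
        set Q1 : Finset (Finset (Fin n)) := Qpart (a k0) b with hQ1_def
        have hQH : Q1 ∈ HM a b := Qpart_mem_HM k0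
        have hpairP : ({a k0, b} : Finset (Fin n)) ∉ P := by
          intro hmem2
          have heq := block_eq hPp hmem2 (hall k0) (by simp) (Finset.mem_singleton_self _)
          have : b ∈ ({a k0} : Finset (Fin n)) := by rw [← heq]; simp
          exact hab k0 (Finset.mem_singleton.mp this).symm
        have hcovQ : ∀ y : Finset (Fin n), y ∈ P → y ∈ Q1 → ∃ w ∈ aset.erase (a k0), y = {w} := by
          intro y hyP hyQ
          rcases mem_Qpart.mp hyQ with rfl | ⟨w, hw1, hw2, rfl⟩
          · exact absurd hyP hpairP
          · obtain ⟨k, rfl⟩ := hsingP w hyP hw2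
            exact ⟨a k, Finset.mem_erase.mpr ⟨hw1, (hmem_aset _).mpr ⟨k, rfl⟩⟩, rfl⟩
        have hcard0 : (aset.erase (a k0)).card + 1 ≤ t := by
          rw [herase_card (a k0) ((hmem_aset _).mpr ⟨k0, rfl⟩)]
        by_cases hQA : Q1 ∈ A
        · exact contra P hPA Q1 hQA (aset.erase (a k0)) hcard0 hcovQ
        · by_cases hjb : j = b
          · -- merge Q1 along its pair block
            have hZQ : ({a k0, b} : Finset (Fin n)) ∈ Q1 := mem_Qpart.mpr (Or.inl rfl)
            have hjZ : j ∈ ({a k0, b} : Finset (Fin n)) := by rw [hjb]; simp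
            have hMA := hW2 Q1 _ hQH hQA hZQ hjZ
            refine contra P hPA _ hMA (aset.erase (a k0)) hcard0 ?_
            intro y hyP hyM
            rcases Finset.mem_union.mp hyM with hy1 | hy2
            · have hy3 := Finset.mem_sdiff.mp hy1
              simp only [Finset.mem_insert, Finset.mem_singleton, not_or] at hy3
              rcases mem_Qpart.mp hy3.1 with rfl | ⟨w, hw1, hw2, rfl⟩
              · exact absurd rfl hy3.2.2
              · obtain ⟨k, rfl⟩ := hsingP w hyP hw2
                exact ⟨a k, Finset.mem_erase.mpr ⟨hw1, (hmem_aset _).mpr ⟨k, rfl⟩⟩, rfl⟩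
            · exfalso
              simp only [Finset.mem_singleton] at hy2
              subst hy2
              have heq := block_eq hPp hyP (hall k0)
                (Finset.mem_insert_of_mem (by simp)) (Finset.mem_singleton_self _)
              have : i ∈ ({a k0} : Finset (Fin n)) := by rw [← heq]; simp
              exact hia (by rw [Finset.mem_singleton.mp this, hmem_aset]; exact ⟨k0, rfl⟩)
          · -- j ≠ b
            have hjaset : ∀ k, j ≠ a k := fun k h => haB k (h ▸ hjB)
            have hjQ : ({j} : Finset (Fin n)) ∈ Q1 :=
              mem_Qpart.mpr (Or.inr ⟨j, hjaset k0, hjb, rfl⟩)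
            have hMA := hW2 Q1 _ hQH hQA hjQ (Finset.mem_singleton_self j)
            -- facts about {a k} ∈ M
            have hakM : ∀ (y : Finset (Fin n)),
                y ∈ (Q1 \ {{i}, ({j} : Finset (Fin n))} ∪ {insert i {j}}) →
                y ≠ insert i {j} → y ∈ Q1 ∧ y ≠ {i} ∧ y ≠ {j} := by
              intro y hy hne3
              rcases Finset.mem_union.mp hy with h | h
              · have h2 := Finset.mem_sdiff.mp h
                simp only [Finset.mem_insert, Finset.mem_singleton, not_or] at h2
                exact ⟨h2.1, h2.2.1, h2.2.2⟩
              · simp only [Finset.mem_singleton] at h; exact absurd h hne3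
            by_cases hijP : insert i ({j} : Finset (Fin n)) ∈ P
            · -- stuck corner : B = {i,j}; compare M with S* or M*
              set Rest : Finset (Fin n) := Finset.univ \ insert i aset with hRest_def
              set Sstar : Finset (Finset (Fin n)) := sgs (insert i aset) ∪ {Rest} with hSs_def
              have hSH : Sstar ∈ HM a b := hT_HM i hia hib
              have hbRest : b ∈ Rest := hbZc i hib
              have hjRest : j ∈ Rest := by
                simp only [hRest_def, Finset.mem_sdiff, Finset.mem_univ, Finset.mem_insert,
                  true_and, not_or]
                exact ⟨hjne, fun h => hjaset ((hmem_aset j).mp h).choose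
                  ((hmem_aset j).mp h).choose_spec.symm⟩
              -- common helper for the final bound
              have hfinal : ∀ (R : Finset (Finset (Fin n))), R ∈ A →
                  (∀ y : Finset (Fin n), y ∈ R →
                    y ∈ (Q1 \ {{i}, ({j} : Finset (Fin n))} ∪ {insert i {j}}) →
                    ∃ w ∈ aset.erase (a k0), y = {w}) → False := by
                intro R hRA hcov
                exact contra R hRA _ hMA (aset.erase (a k0)) hcard0 hcov
              have hmemM : ∀ w : Fin n, w ∈ aset →
                  ({w} : Finset (Fin n)) ∈ (Q1 \ {{i}, ({j} : Finset (Fin n))} ∪ {insert i {j}}) →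
                  w ≠ a k0 := by
                intro w hwa hwM h0
                subst h0
                rcases Finset.mem_union.mp hwM with h | h
                · have h2 := (Finset.mem_sdiff.mp h).1
                  rcases mem_Qpart.mp h2 with h3 | ⟨w', hw1, hw2, h3⟩
                  · have : b ∈ ({a k0} : Finset (Fin n)) := by rw [h3]; simp
                    exact hab k0 (Finset.mem_singleton.mp this).symm
                  · exact hw1 (Finset.singleton_injective h3).symm
                · simp only [Finset.mem_singleton] at h
                  have : i ∈ ({a k0} : Finset (Fin n)) := by rw [h]; simp
                  exact hia ((hmem_aset _).mpr ⟨k0, (Finset.mem_singleton.mp this).symm⟩)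
              by_cases hSA : Sstar ∈ A
              · apply hfinal Sstar hSA
                intro y hyS hyM
                rcases Finset.mem_union.mp hyS with h | h
                · obtain ⟨w, hw, rfl⟩ := mem_sgs.mp h
                  rcases Finset.mem_insert.mp hw with hwi | hwa
                  · exfalso
                    subst hwi
                    rcases Finset.mem_union.mp hyM with h2 | h2
                    · have h3 := Finset.mem_sdiff.mp h2
                      simp only [Finset.mem_insert, Finset.mem_singleton, not_or] at h3
                      exact h3.2.1 (by trivial)
                    · simp only [Finset.mem_singleton] at h2
                      have hji : j ∈ ({w} : Finset (Fin n)) := by rw [h2]; simp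
                      exact hjne (Finset.mem_singleton.mp hji)
                  · have hk := hmemM w hwa hyM
                    exact ⟨w, Finset.mem_erase.mpr ⟨hk, hwa⟩, rfl⟩
                · exfalso
                  simp only [Finset.mem_singleton] at h
                  subst h
                  rcases Finset.mem_union.mp hyM with h2 | h2
                  · have h3 := (Finset.mem_sdiff.mp h2).1
                    rcases mem_Qpart.mp h3 with h4 | ⟨w', hw1, hw2, h4⟩
                    · have : a k0 ∈ Rest := by rw [h4]; simp
                      simp only [hRest_def, Finset.mem_sdiff, Finset.mem_insert, not_or] at this
                      exact this.2.2 ((hmem_aset _).mpr ⟨k0, rfl⟩)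
                    · have hb' : b ∈ ({w'} : Finset (Fin n)) := by rw [← h4]; exact hbRest
                      have hj' : j ∈ ({w'} : Finset (Fin n)) := by rw [← h4]; exact hjRest
                      exact hjb ((Finset.mem_singleton.mp hj').trans
                        (Finset.mem_singleton.mp hb').symm)
                  · simp only [Finset.mem_singleton] at h2
                    have : i ∈ Rest := by rw [h2]; simp
                    simp only [hRest_def, Finset.mem_sdiff, Finset.mem_insert, not_or] at this
                    exact this.2.1 (by trivial)
              · have hRestS : Rest ∈ Sstar := Finset.mem_union_right _ (Finset.mem_singleton_self _)
                have hM2A := hW2 Sstar Rest hSH hSA hRestS hjRest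
                apply hfinal _ hM2A
                intro y hyS hyM
                rcases Finset.mem_union.mp hyS with h | h
                · have h2 := Finset.mem_sdiff.mp h
                  simp only [Finset.mem_insert, Finset.mem_singleton, not_or] at h2
                  rcases Finset.mem_union.mp h2.1 with h3 | h3
                  · obtain ⟨w, hw, rfl⟩ := mem_sgs.mp h3
                    rcases Finset.mem_insert.mp hw with rfl | hwa
                    · exact absurd rfl h2.2.1
                    · exact ⟨w, Finset.mem_erase.mpr ⟨hmemM w hwa hyM, hwa⟩, rfl⟩
                  · simp only [Finset.mem_singleton] at h3
                    exact absurd h3 h2.2.2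
                · exfalso
                  simp only [Finset.mem_singleton] at h
                  subst h
                  have hbI : b ∈ insert i Rest := Finset.mem_insert_of_mem hbRest
                  rcases Finset.mem_union.mp hyM with h2 | h2
                  · have h3 := (Finset.mem_sdiff.mp h2).1
                    rcases mem_Qpart.mp h3 with h4 | ⟨w', hw1, hw2, h4⟩
                    · have : a k0 ∈ insert i Rest := by rw [h4]; simp
                      rcases Finset.mem_insert.mp this with h5 | h5
                      · exact hia (h5 ▸ (hmem_aset _).mpr ⟨k0, rfl⟩)
                      · simp only [hRest_def, Finset.mem_sdiff, Finset.mem_insert, not_or] at h5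
                        exact h5.2.2 ((hmem_aset _).mpr ⟨k0, rfl⟩)
                    · have hb' : b ∈ ({w'} : Finset (Fin n)) := by rw [← h4]; exact hbI
                      have hi' : i ∈ ({w'} : Finset (Fin n)) := by
                        rw [← h4]; exact Finset.mem_insert_self _ _
                      exact hib ((Finset.mem_singleton.mp hi').trans
                        (Finset.mem_singleton.mp hb').symm)
                  · simp only [Finset.mem_singleton] at h2
                    have : b ∈ insert i ({j} : Finset (Fin n)) := by rw [← h2]; exact hbI
                    rcases Finset.mem_insert.mp this with h5 | h5
                    · exact hib h5.symm
                    · exact hjb (Finset.mem_singleton.mp h5).symm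
            · -- insert i {j} ∉ P : direct bound on P ∩ M
              refine contra P hPA _ hMA (aset.erase (a k0)) hcard0 ?_
              intro y hyP hyM
              have hyne : y ≠ insert i ({j} : Finset (Fin n)) := fun h => hijP (h ▸ hyP)
              obtain ⟨hyQ, hy1, hy2⟩ := hakM y hyM hyne
              rcases mem_Qpart.mp hyQ with rfl | ⟨w, hw1, hw2, rfl⟩
              · exact absurd hyP hpairP
              · obtain ⟨k, rfl⟩ := hsingP w hyP hw2
                exact ⟨a k, Finset.mem_erase.mpr ⟨hw1, (hmem_aset _).mpr ⟨k, rfl⟩⟩, rfl⟩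
      · -- III-B : some a-singleton missing
        push_neg at hall
        obtain ⟨m, hm⟩ := hall
        have hcontra_m : (aset.erase (a m)).card + 1 ≤ t := by
          have := herase_card (a m) ((hmem_aset _).mpr ⟨m, rfl⟩)
          omega
        by_cases hgood : ∃ c ∈ Cset, ({c} : Finset (Fin n)) ∉ P ∧
            Finset.univ \ insert c aset ≠ B
        · obtain ⟨c, hcC, hcP, hZB⟩ := hgood
          obtain ⟨hcb, hci, hcas⟩ := (hCmem c).mp hcC
          have hTA : (sgs (insert c aset) ∪ {Finset.univ \ insert c aset}) ∈ A :=
            hW1 _ (hT_HM c hcas hcb) (hiT c hci hcb)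
          refine contra P hPA _ hTA (aset.erase (a m)) hcontra_m ?_
          intro y hyP hyT
          rcases Finset.mem_union.mp hyT with h | h
          · obtain ⟨w, hw, rfl⟩ := mem_sgs.mp h
            rcases Finset.mem_insert.mp hw with hwc | hwa
            · exact absurd (hwc ▸ hyP) hcP
            · refine ⟨w, Finset.mem_erase.mpr ⟨?_, hwa⟩, rfl⟩
              intro h0
              exact hm (h0 ▸ hyP)
          · exfalso
            simp only [Finset.mem_singleton] at h
            subst h
            exact hZB (block_eq hPp hyP hBP (hiZc c hci) hiB)
        · have hfail : ∀ c ∈ Cset, ({c} : Finset (Fin n)) ∉ P →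
              Finset.univ \ insert c aset = B := by
            intro c hc hcP
            by_contra hne3
            exact hgood ⟨c, hc, hcP, hne3⟩
          by_cases hc0 : ∃ c₀ ∈ Cset, ({c₀} : Finset (Fin n)) ∉ P
          · obtain ⟨c₀, hc₀C, hc₀P⟩ := hc0
            obtain ⟨hc₀b, hc₀i, hc₀as⟩ := (hCmem c₀).mp hc₀C
            have hB0 : Finset.univ \ insert c₀ aset = B := hfail c₀ hc₀C hc₀P
            have hjb2 : j = b := by
              by_contra hjb
              have hjB0 : j ∈ Finset.univ \ insert c₀ aset := by rw [hB0]; exact hjB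
              simp only [Finset.mem_sdiff, Finset.mem_univ, Finset.mem_insert, true_and,
                not_or] at hjB0
              have hjC : j ∈ Cset := (hCmem j).mpr ⟨hjb, hjne, hjB0.2⟩
              -- j ∈ Cset with j ≠ c₀ : contradiction with uniqueness
              have hjcP : ({j} : Finset (Fin n)) ∉ P := hjP
              have h2 := hfail j hjC hjcP
              have h3 : j ∈ Finset.univ \ insert j aset := by rw [h2]; exact hjB
              simp at h3
            obtain ⟨E, hEP, hc₀E⟩ := exists_block hPp c₀
            have hEne : ∃ e ∈ E, e ≠ c₀ := by
              by_contra h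
              push_neg at h
              have : E = {c₀} := Finset.eq_singleton_iff_unique_mem.mpr ⟨hc₀E, h⟩
              exact hc₀P (this ▸ hEP)
            obtain ⟨e, heE, hec₀⟩ := hEne
            have hc₀B : c₀ ∉ B := by rw [← hB0]; simp
            have heB : e ∉ B := by
              intro h
              have := block_eq hPp hEP hBP heE h
              exact hc₀B (this ▸ hc₀E)
            have heas : e ∈ aset := by
              by_contra h
              apply heB
              rw [← hB0]
              simp only [Finset.mem_sdiff, Finset.mem_univ, Finset.mem_insert, true_and, not_or]
              exact ⟨hec₀, h⟩
            obtain ⟨k, hak⟩ := (hmem_aset e).mp heas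
            have hakP : ({a k} : Finset (Fin n)) ∉ P :=
              not_singleton_mem hPp hEP (by rw [hak]; exact heE) hc₀E
                (fun h => hc₀as (by rw [h, hmem_aset]; exact ⟨k, rfl⟩))
            have hakB : a k ∉ B := by rw [hak]; exact heB
            have hbB : b ∈ B := by rw [← hB0]; exact hbZc c₀ hc₀b
            have hQH := Qpart_mem_HM (a := a) (b := b) k
            have hcontra_k : (aset.erase (a k)).card + 1 ≤ t := by
              have := herase_card (a k) ((hmem_aset _).mpr ⟨k, rfl⟩)
              omega
            have hsing2 : ∀ w : Fin n, ({w} : Finset (Fin n)) ∈ P → w ≠ a k → w ≠ b →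
                w ∈ aset.erase (a k) := by
              intro w hwP hwk hwb
              have hwB : w ∉ B := fun h => hsingB w h hwP
              have hwin : w ∈ insert c₀ aset := by
                by_contra h
                apply hwB
                rw [← hB0]
                exact Finset.mem_sdiff.mpr ⟨Finset.mem_univ w, h⟩
              rcases Finset.mem_insert.mp hwin with h | h
              · exact absurd (h ▸ hwP) hc₀P
              · exact Finset.mem_erase.mpr ⟨hwk, h⟩
            have hpairB : ({a k, b} : Finset (Fin n)) ∉ P := by
              intro h
              have := block_eq hPp h hBP (by simp) hbB
              apply hakB
              rw [← this]
              simp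
            by_cases hQA : Qpart (a k) b ∈ A
            · refine contra P hPA _ hQA (aset.erase (a k)) hcontra_k ?_
              intro y hyP hyQ
              rcases mem_Qpart.mp hyQ with rfl | ⟨w, hw1, hw2, rfl⟩
              · exact absurd hyP hpairB
              · exact ⟨w, hsing2 w hyP hw1 hw2, rfl⟩
            · have hZQ : ({a k, b} : Finset (Fin n)) ∈ Qpart (a k) b := mem_Qpart.mpr (Or.inl rfl)
              have hjZ : j ∈ ({a k, b} : Finset (Fin n)) := by rw [hjb2]; simp
              have hMA := hW2 _ _ hQH hQA hZQ hjZ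
              refine contra P hPA _ hMA (aset.erase (a k)) hcontra_k ?_
              intro y hyP hyM
              rcases Finset.mem_union.mp hyM with h | h
              · have h2 := Finset.mem_sdiff.mp h
                simp only [Finset.mem_insert, Finset.mem_singleton, not_or] at h2
                rcases mem_Qpart.mp h2.1 with h3 | ⟨w, hw1, hw2, rfl⟩
                · exact absurd h3 h2.2.2
                · exact ⟨w, hsing2 w hyP hw1 hw2, rfl⟩
              · exfalso
                simp only [Finset.mem_singleton] at h
                subst h
                have := block_eq hPp hyP hBP (Finset.mem_insert_self _ _) hiB
                apply hakB
                rw [← this]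
                simp
          · -- (iib) every element of Cset is a singleton of P
            push_neg at hc0
            obtain ⟨c', hc'C⟩ := Finset.card_pos.mp (by omega : 0 < Cset.card)
            obtain ⟨hc'b, hc'i, hc'as⟩ := (hCmem c').mp hc'C
            set Rest : Finset (Fin n) := Finset.univ \ insert i aset with hRest_def
            set Sstar : Finset (Finset (Fin n)) := sgs (insert i aset) ∪ {Rest} with hSs_def
            have hSH : Sstar ∈ HM a b := hT_HM i hia hib
            have hbRest : b ∈ Rest := hbZc i hib
            have hc'Rest : c' ∈ Rest := by
              simp only [hRest_def, Finset.mem_sdiff, Finset.mem_univ, Finset.mem_insert,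
                true_and, not_or]
              exact ⟨hc'i, hc'as⟩
            have hRestP : Rest ∉ P := by
              intro h
              have heq := block_eq hPp h (hc0 c' hc'C) hc'Rest (Finset.mem_singleton_self c')
              have hb2 : b ∈ ({c'} : Finset (Fin n)) := by rw [← heq]; exact hbRest
              exact hc'b (Finset.mem_singleton.mp hb2).symm
            by_cases hSA : Sstar ∈ A
            · refine contra P hPA _ hSA (aset.erase (a m)) hcontra_m ?_
              intro y hyP hyS
              rcases Finset.mem_union.mp hyS with h | h
              · obtain ⟨w, hw, rfl⟩ := mem_sgs.mp h
                rcases Finset.mem_insert.mp hw with hwi | hwa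
                · exact absurd (hwi ▸ hyP) hiP
                · exact ⟨w, Finset.mem_erase.mpr ⟨fun h0 => hm (h0 ▸ hyP), hwa⟩, rfl⟩
              · simp only [Finset.mem_singleton] at h
                exact absurd (h ▸ hyP) hRestP
            · by_cases hjb : j = b
              · have hjRest : j ∈ Rest := by rw [hjb]; exact hbRest
                have hMA := hW2 Sstar Rest hSH hSA
                  (Finset.mem_union_right _ (Finset.mem_singleton_self _)) hjRest
                refine contra P hPA _ hMA (aset.erase (a m)) hcontra_m ?_
                intro y hyP hyM
                rcases Finset.mem_union.mp hyM with h | h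
                · have h2 := Finset.mem_sdiff.mp h
                  simp only [Finset.mem_insert, Finset.mem_singleton, not_or] at h2
                  rcases Finset.mem_union.mp h2.1 with h3 | h3
                  · obtain ⟨w, hw, rfl⟩ := mem_sgs.mp h3
                    rcases Finset.mem_insert.mp hw with hwi | hwa
                    · exact absurd (hwi ▸ hyP) hiP
                    · exact ⟨w, Finset.mem_erase.mpr ⟨fun h0 => hm (h0 ▸ hyP), hwa⟩, rfl⟩
                  · simp only [Finset.mem_singleton] at h3
                    exact absurd h3 h2.2.2
                · exfalso
                  simp only [Finset.mem_singleton] at h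
                  subst h
                  have heq := block_eq hPp hyP hBP (Finset.mem_insert_self _ _) hiB
                  have hcB2 : c' ∈ B := by rw [← heq]; exact Finset.mem_insert_of_mem hc'Rest
                  exact hsingB c' hcB2 (hc0 c' hc'C)
              · -- j ∈ aset : compare the merge of Sstar with T c'
                have hjC : j ∉ Cset := fun h => hjP (hc0 j h)
                have hjas : j ∈ aset := by
                  by_contra h
                  exact hjC ((hCmem j).mpr ⟨hjb, hjne, h⟩)
                have hjS : ({j} : Finset (Fin n)) ∈ Sstar :=
                  Finset.mem_union_left _ (mem_sgs.mpr ⟨j, Finset.mem_insert_of_mem hjas, rfl⟩)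
                have hMA := hW2 Sstar _ hSH hSA hjS (Finset.mem_singleton_self j)
                have hTA : (sgs (insert c' aset) ∪ {Finset.univ \ insert c' aset}) ∈ A :=
                  hW1 _ (hT_HM c' hc'as hc'b) (hiT c' hc'i hc'b)
                have hcontra_j : (aset.erase j).card + 1 ≤ t := by
                  have := herase_card j hjas
                  omega
                refine contra _ hMA _ hTA (aset.erase j) hcontra_j ?_
                intro y hyM hyT
                rcases Finset.mem_union.mp hyT with h | h
                · obtain ⟨w, hw, rfl⟩ := mem_sgs.mp h
                  rcases Finset.mem_insert.mp hw with hwc | hwa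
                  · exfalso
                    subst hwc
                    rcases Finset.mem_union.mp hyM with h2 | h2
                    · have h3 := (Finset.mem_sdiff.mp h2).1
                      rcases Finset.mem_union.mp h3 with h4 | h4
                      · obtain ⟨w', hw', hww⟩ := mem_sgs.mp h4
                        have hcw : w = w' := Finset.singleton_injective hww
                        subst hcw
                        rcases Finset.mem_insert.mp hw' with h5 | h5
                        · exact hc'i h5
                        · exact hc'as h5
                      · simp only [Finset.mem_singleton] at h4
                        have : b ∈ ({w} : Finset (Fin n)) := by rw [h4]; exact hbRest
                        exact hc'b (Finset.mem_singleton.mp this).symm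
                    · simp only [Finset.mem_singleton] at h2
                      have : i ∈ ({w} : Finset (Fin n)) := by
                        rw [h2]; exact Finset.mem_insert_self _ _
                      exact hc'i (Finset.mem_singleton.mp this).symm
                  · refine ⟨w, Finset.mem_erase.mpr ⟨?_, hwa⟩, rfl⟩
                    intro h0
                    subst h0
                    rcases Finset.mem_union.mp hyM with h2 | h2
                    · have h3 := Finset.mem_sdiff.mp h2
                      simp only [Finset.mem_insert, Finset.mem_singleton, not_or] at h3
                      exact h3.2.2 (by trivial)
                    · simp only [Finset.mem_singleton] at h2
                      have : i ∈ ({w} : Finset (Fin n)) := by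
                        rw [h2]; exact Finset.mem_insert_self _ _
                      exact hij (Finset.mem_singleton.mp this)
                · exfalso
                  simp only [Finset.mem_singleton] at h
                  subst h
                  rcases Finset.mem_union.mp hyM with h2 | h2
                  · have h3 := (Finset.mem_sdiff.mp h2).1
                    rcases Finset.mem_union.mp h3 with h4 | h4
                    · obtain ⟨w', hw', hww⟩ := mem_sgs.mp h4
                      have hb2 : b ∈ ({w'} : Finset (Fin n)) := by
                        rw [← hww]; exact hbZc c' hc'b
                      have hi2 : i ∈ ({w'} : Finset (Fin n)) := by
                        rw [← hww]; exact hiZc c' hc'i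
                      exact hib ((Finset.mem_singleton.mp hi2).trans
                        (Finset.mem_singleton.mp hb2).symm)
                    · simp only [Finset.mem_singleton] at h4
                      have : i ∈ Rest := by rw [← h4]; exact hiZc c' hc'i
                      simp only [hRest_def, Finset.mem_sdiff, Finset.mem_insert, not_or] at this
                      exact this.2.1 (by trivial)
                  · simp only [Finset.mem_singleton] at h2
                    have : j ∈ Finset.univ \ insert c' aset := by
                      rw [h2]; exact Finset.mem_insert_of_mem (Finset.mem_singleton_self j)
                    simp only [Finset.mem_sdiff, Finset.mem_insert, not_or] at this
                    exact this.2.2 hjas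



theorem undo_splitting (n t : ℕ) (ht : 0 < t) (hn : t + 3 ≤ n)
    (A : Set (Finset (Finset (Fin n))))
    (hpart : ∀ P ∈ A, IsSetPartition P) (hA : TInter t A)
    (i j : Fin n) (hij : i ≠ j)
    (a : Fin t → Fin n) (b : Fin n)
    (ha : Function.Injective a) (hab : ∀ i, a i ≠ b)
    (hS : splitFam i j A = HM a b) :
    A = HM a b := by
  classical
  by_contra hne
  have hmem : ∀ x, x ∈ HM a b ↔ (x ∈ A ∧ splitP i j x ∈ A) ∨
      ∃ y ∈ A, splitP i j y ∉ A ∧ splitP i j y = x := by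
    intro x
    rw [← hS]
    simp only [splitFam, Set.mem_union, Set.mem_diff, Set.mem_image, Set.mem_setOf_eq]
    tauto
  have hW1 : ∀ S ∈ HM a b, ({i} : Finset (Fin n)) ∉ S → S ∈ A := by
    intro S hSH hiS
    rcases (hmem S).mp hSH with ⟨h, _⟩ | ⟨y, hyA, hyS, rfl⟩
    · exact h
    · by_cases hy : splitP i j y = y
      · rw [hy]; exact hyA
      · obtain ⟨B₀, hB₀, hiB₀, hjB₀⟩ := exists_block_of_splitP_ne hy
        exact absurd (singleton_i_mem_splitP (hpart y hyA) hB₀ hiB₀ hjB₀) hiS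
  have hW2 : ∀ S Z, S ∈ HM a b → S ∉ A → Z ∈ S → j ∈ Z →
      ((S \ {{i}, Z}) ∪ {insert i Z}) ∈ A := by
    intro S Z hSH hSA hZS hjZ
    rcases (hmem S).mp hSH with ⟨h, _⟩ | ⟨y, hyA, hyS, hy⟩
    · exact absurd h hSA
    have hyne : splitP i j y ≠ y := by
      intro hcon
      exact hSA (by rw [← hy, hcon]; exact hyA)
    obtain ⟨B₀, hB₀, hiB₀, hjB₀⟩ := exists_block_of_splitP_ne hyne
    have hyp := hpart y hyA
    have hsplit := splitP_eq hyp hB₀ hiB₀ hjB₀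
    rw [hsplit] at hy
    have hjne : j ≠ i := fun h => hij h.symm
    have hiP : ({i} : Finset (Fin n)) ∉ y := not_singleton_mem hyp hB₀ hiB₀ hjB₀ hjne
    have hjBd : j ∈ B₀ \ {i} := Finset.mem_sdiff.mpr ⟨hjB₀, by simp [hjne]⟩
    have hBd : B₀ \ {i} ∉ y := by
      intro hmem2
      have heq := block_eq hyp hmem2 hB₀ hjBd hjB₀
      have : i ∈ B₀ \ {i} := by rw [heq]; exact hiB₀
      simp at this
    have hZeq : Z = B₀ \ {i} := by
      have hSpart : IsSetPartition S := HM_isPart hab hSH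
      have hmem3 : B₀ \ {i} ∈ S := by rw [← hy]; exact Finset.mem_union_right _ (by simp)
      exact block_eq hSpart hZS hmem3 hjZ hjBd
    have hins : insert i Z = B₀ := by
      subst hZeq
      ext u
      simp only [Finset.mem_insert, Finset.mem_sdiff, Finset.mem_singleton]
      constructor
      · rintro (rfl | ⟨h, _⟩)
        · exact hiB₀
        · exact h
      · intro hu
        by_cases hui : u = i
        · exact Or.inl hui
        · exact Or.inr ⟨hu, hui⟩
    have hfinal : (S \ {{i}, Z}) ∪ {insert i Z} = y := by
      subst hZeq
      rw [hins, ← hy]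
      ext z
      simp only [Finset.mem_union, Finset.mem_sdiff, Finset.mem_insert, Finset.mem_singleton,
        not_or]
      constructor
      · rintro (⟨(⟨hz1, _⟩ | h), hne2⟩ | rfl)
        · exact hz1
        · rcases h with rfl | rfl
          · exact absurd rfl hne2.1
          · exact absurd rfl hne2.2
        · exact hB₀
      · intro hz
        by_cases hzB : z = B₀
        · right; exact hzB
        · left
          refine ⟨Or.inl ⟨hz, hzB⟩, ?_, ?_⟩
          · intro h; exact hiP (h ▸ hz)
          · intro h; exact hBd (h ▸ hz)
    rw [hfinal]; exact hyA
  have hkey : ∃ P₀, P₀ ∈ A ∧ splitP i j P₀ ∉ A ∧ splitP i j P₀ ∈ HM a b := by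
    have hns : ¬ (A ⊆ HM a b ∧ HM a b ⊆ A) := fun ⟨h1, h2⟩ => hne (Set.Subset.antisymm h1 h2)
    rcases not_and_or.mp hns with h | h
    · obtain ⟨x, hxA, hxH⟩ := Set.not_subset.mp h
      have hsx : splitP i j x ∉ A := by
        intro hin
        exact hxH ((hmem x).mpr (Or.inl ⟨hxA, hin⟩))
      exact ⟨x, hxA, hsx, (hmem _).mpr (Or.inr ⟨x, hxA, hsx, rfl⟩)⟩
    · obtain ⟨x, hxH, hxA⟩ := Set.not_subset.mp h
      rcases (hmem x).mp hxH with ⟨h1, _⟩ | ⟨y, hyA, hyS, hy⟩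
      · exact absurd h1 hxA
      · exact ⟨y, hyA, hyS, by rw [hy]; exact hxH⟩
  obtain ⟨P, hPA, hsA, hsH⟩ := hkey
  have hPp := hpart P hPA
  have hne2 : splitP i j P ≠ P := by
    intro h
    exact hsA (by rw [h]; exact hPA)
  obtain ⟨B, hBP, hiB, hjB⟩ := exists_block_of_splitP_ne hne2
  have hPH : P ∉ HM a b := by
    intro hPHm
    rcases (hmem P).mp hPHm with ⟨_, h⟩ | ⟨y, hyA, hyS, hy⟩
    · exact hsA h
    · exact hyS (by rw [hy]; exact hPA)
  exact main_contra ht hn A hA i j hij a b ha hab hW1 hW2 P B hPA hPp hPH hBP hiB hjB
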